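/- arXiv:2404.00841 — 7 statements merged into one kernel-verified Lean document; each statement's English description precedes it below -/
import Mathlib

section
/- For every normal subgroup N of F, the normal closure L_N of N in F(Y_C) satisfies L_N ∩ F = N. -/
/-!
The letters `a_{1,i}` appear in no `A_k` with `k ≠ i` and only once in `A_i`, so
`a_{1,i} ↦ A_i`, `a_{j,i} ↦ 1` (`j > 1`) defines a retraction `r` of `F(Y_C)` onto `F`.
Because `N` is normal in `F ⊇ r(F(Y_C))`, the preimage `r⁻¹(N)` is normal in `F(Y_C)`; it
contains `N`, hence `L_N`, and on `F`, where `r` is the identity, it cuts out exactly `N`.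
-/

def blockA (m C : ℕ) (i : Fin m) : FreeGroup (Fin C × Fin m) :=
  (List.ofFn fun j : Fin C => FreeGroup.of (j, i)).prod

def blockF (m C : ℕ) : Subgroup (FreeGroup (Fin C × Fin m)) :=
  Subgroup.closure (Set.range (blockA m C))

namespace Subgroup

variable {G : Type*} [Group G] {H N : Subgroup G} {r : G →* G}

theorem normal_comap_of_range_le (hrH : r.range ≤ H)
    (hN : ∀ h ∈ H, ∀ x ∈ N, h * x * h⁻¹ ∈ N) : (N.comap r).Normal where
  conj_mem x hx g := by
    simpa only [mem_comap, map_mul, map_inv] using hN (r g) (hrH ⟨g, rfl⟩) (r x) hx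

theorem normalClosure_inf_eq_of_retraction (hrH : r.range ≤ H) (hr : ∀ h ∈ H, r h = h)
    (hNH : N ≤ H) (hN : ∀ h ∈ H, ∀ x ∈ N, h * x * h⁻¹ ∈ N) :
    normalClosure (N : Set G) ⊓ H = N := by
  have := normal_comap_of_range_le hrH hN
  have hNr : normalClosure (N : Set G) ≤ N.comap r :=
    normalClosure_le_normal fun x hx => by simpa [hr x (hNH hx)] using hx
  refine le_antisymm (fun x ⟨hxN, hxH⟩ => ?_) (le_inf subset_normalClosure hNH)
  simpa [hr x hxH] using hNr hxN

end Subgroup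

def blockRetraction (m C : ℕ) : FreeGroup (Fin C × Fin m) →* FreeGroup (Fin C × Fin m) :=
  FreeGroup.lift fun p => if p.1.val = 0 then blockA m C p.2 else 1

theorem range_blockRetraction_le (m C : ℕ) : (blockRetraction m C).range ≤ blockF m C := by
  refine FreeGroup.range_lift_le ?_
  rintro _ ⟨p, rfl⟩
  dsimp only
  split_ifs
  · exact Subgroup.subset_closure ⟨p.2, rfl⟩
  · exact one_mem _

theorem blockRetraction_blockA (m C : ℕ) (i : Fin m) :
    blockRetraction m C (blockA m C i) = blockA m C i := by
  cases C with
  | zero => simp [blockA]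
  | succ k =>
    simp [blockA, blockRetraction, map_list_prod, List.map_ofFn, List.ofFn_succ,
      Function.comp_def, Fin.succ_ne_zero]

theorem blockRetraction_eq_self (m C : ℕ) {x : FreeGroup (Fin C × Fin m)} (hx : x ∈ blockF m C) :
    blockRetraction m C x = x := by
  induction hx using Subgroup.closure_induction with
  | mem y hy => obtain ⟨i, rfl⟩ := hy; exact blockRetraction_blockA m C i
  | one => simp
  | mul a b _ _ ha hb => simp [ha, hb]
  | inv a _ ha => simp [ha]

theorem statement2_general (m C : ℕ)
    (N : Subgroup (FreeGroup (Fin C × Fin m))) (hNF : N ≤ blockF m C)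
    (hNnormal : ∀ f ∈ blockF m C, ∀ x ∈ N, f * x * f⁻¹ ∈ N) :
    Subgroup.normalClosure (N : Set (FreeGroup (Fin C × Fin m))) ⊓ blockF m C = N :=
  Subgroup.normalClosure_inf_eq_of_retraction (range_blockRetraction_le m C)
    (fun _ => blockRetraction_eq_self m C) hNF hNnormal

/-- **Lemma 3.1.** For any normal subgroup `N` of `F`, the normal closure `L_N` of `N`
in `F(Y_C)` satisfies `L_N ∩ F = N`. -/
theorem statement2 (m C : ℕ) (hm : 1 ≤ m) (hC : 1 ≤ C)
    (N : Subgroup (FreeGroup (Fin C × Fin m))) (hNF : N ≤ blockF m C)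
    (hNnormal : ∀ f ∈ blockF m C, ∀ x ∈ N, f * x * f⁻¹ ∈ N) :
    Subgroup.normalClosure (N : Set (FreeGroup (Fin C × Fin m))) ⊓ blockF m C = N :=
  statement2_general m C N hNF hNnormal
end

section
/- For every w ∈ Q, |φ(w)|_{Y_C} = C·|w|_Y, where |·|_Y denotes word length in Q with respect to the images of y_1, …, y_m and |·|_{Y_C} denotes word length in Q_C with respect to the images of the letters of Y_C. -/
/-!
Each generator `y_i^{±1}` of `Q` is sent by `φ` to a word of length `C`, which gives
`|φ(w)| ≤ C·|w|`. Conversely, for every `j` the map `a_{j',i} ↦ y_i` if `j' = j` and `↦ 1`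
otherwise respects the relators and is a left inverse of `φ`. Projecting a geodesic word for
`φ(w)` along these `C` retractions yields `C` words for `w`, and each letter of the geodesic word
survives in at most one of them, so `C·|w| ≤ |φ(w)|`.
-/

/-- Word length of `g` with respect to a generating set `S` of a group:
the least length of a word over `S ∪ S⁻¹` representing `g`. -/
noncomputable def wordLength {G : Type*} [Group G] (S : Set G) (g : G) : ℕ :=
  sInf {k : ℕ | ∃ l : List G, l.length = k ∧ (∀ x ∈ l, x ∈ S ∨ x⁻¹ ∈ S) ∧ l.prod = g}

/-- The homomorphism `β : F(y_1,…,y_m) → F(Y_C)`, `y_i ↦ A_i`. -/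
def blockβ (m C : ℕ) : FreeGroup (Fin m) →* FreeGroup (Fin C × Fin m) :=
  FreeGroup.lift (blockA m C)

/-- The relator set of `Q = ⟨y_1,…,y_m | S⟩`: the elements of `F(y_1,…,y_m)` given by
the (nonempty, positive) words of `S`. -/
def relS (m : ℕ) (S : Set (List (Fin m))) : Set (FreeGroup (Fin m)) :=
  (fun s : List (Fin m) => FreeGroup.mk (s.map fun i => (i, true))) '' S

/-- The relator set `S_C = {r_C : r ∈ S}` of `Q_C = ⟨Y_C | S_C⟩`. -/
def relSC (m C : ℕ) (S : Set (List (Fin m))) : Set (FreeGroup (Fin C × Fin m)) :=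
  blockβ m C '' relS m S

lemma List.prod_ofFn_ite_eq {M : Type*} [Monoid M] {n : ℕ} (j : Fin n) (g : M) :
    (List.ofFn fun j' => if j' = j then g else 1).prod = g := by
  -- all factors are powers of `g`, so the product may be computed in `Multiplicative ℕ`
  have hpow : (List.ofFn fun j' => if j' = j then g else 1) =
      (List.ofFn fun j' : Fin n => if j' = j then Multiplicative.ofAdd 1 else 1).map
        (powersHom M g) := by
    simp [List.map_ofFn, Function.comp_def, apply_ite]
  rw [hpow, ← map_list_prod, List.prod_ofFn, Finset.prod_ite_eq']
  simp

lemma List.sum_countP_le_length {ι α : Type*} [Fintype ι] (p : ι → α → Bool) {l : List α}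
    (hp : ∀ x ∈ l, ∀ i j, p i x → p j x → i = j) : ∑ i, l.countP (p i) ≤ l.length := by
  induction l with
  | nil => simp
  | cons a l ih =>
    have hhead : ∑ i, (if p i a then 1 else 0) ≤ 1 := by
      rw [Finset.sum_boole, Nat.cast_id]
      exact Finset.card_le_one.2 fun i hi j hj =>
        hp a List.mem_cons_self i j (Finset.mem_filter.1 hi).2 (Finset.mem_filter.1 hj).2
    have htail := ih fun x hx => hp x (List.mem_cons_of_mem a hx)
    simp only [List.countP_cons, Finset.sum_add_distrib, List.length_cons]
    omega

section WordLength

variable {G H : Type*} [Group G] [Group H]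

def IsWordOver (S : Set G) (l : List G) : Prop :=
  ∀ x ∈ l, x ∈ S ∨ x⁻¹ ∈ S

namespace IsWordOver

variable {S : Set G} {l l' : List G}

lemma nil : IsWordOver S [] := by
  simp [IsWordOver]

lemma append (h : IsWordOver S l) (h' : IsWordOver S l') : IsWordOver S (l ++ l') := by
  intro x hx
  rcases List.mem_append.1 hx with hx | hx
  exacts [h x hx, h' x hx]

lemma inv_reverse (h : IsWordOver S l) : IsWordOver S (l.map (·⁻¹)).reverse := by
  intro x hx
  obtain ⟨y, hy, rfl⟩ := List.mem_map.1 (List.mem_reverse.1 hx)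
  simpa [or_comm] using h y hy

end IsWordOver

lemma wordLength_prod_le_length {S : Set G} {l : List G} (hl : IsWordOver S l) :
    wordLength S l.prod ≤ l.length :=
  Nat.sInf_le ⟨l, rfl, hl, rfl⟩

lemma exists_isWordOver_length_eq_wordLength {S : Set G} (hS : Subgroup.closure S = ⊤)
    (g : G) : ∃ l, IsWordOver S l ∧ l.length = wordLength S g ∧ l.prod = g := by
  have hg : g ∈ Submonoid.closure (S ∪ S⁻¹) := by
    rw [← Subgroup.closure_toSubmonoid, Subgroup.mem_toSubmonoid, hS]
    trivial
  obtain ⟨l, hl, rfl⟩ := Submonoid.exists_list_of_mem_closure hg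
  have hwords : {k | ∃ w : List G, w.length = k ∧ IsWordOver S w ∧ w.prod = l.prod}.Nonempty :=
    ⟨l.length, l, rfl, fun x hx => (hl x hx).imp id Set.mem_inv.1, rfl⟩
  obtain ⟨w, hlen, hw, hprod⟩ := Nat.sInf_mem hwords
  exact ⟨w, hw, hlen, hprod⟩

lemma exists_isWordOver_prod_eq_map_prod {f : G →* H} {S : Set G} {T : Set H} {k : ℕ}
    (hf : ∀ s ∈ S, ∃ w, IsWordOver T w ∧ w.length = k ∧ w.prod = f s) :
    ∀ l : List G, IsWordOver S l →
      ∃ w, IsWordOver T w ∧ w.length = k * l.length ∧ w.prod = f l.prod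
  | [], _ => ⟨[], IsWordOver.nil, rfl, by simp⟩
  | a :: l, hl => by
    obtain ⟨w, hw, hwlen, hwprod⟩ := exists_isWordOver_prod_eq_map_prod hf l
      fun x hx => hl x (List.mem_cons_of_mem a hx)
    obtain ⟨v, hv, hvlen, hvprod⟩ : ∃ v, IsWordOver T v ∧ v.length = k ∧ v.prod = f a := by
      rcases hl a List.mem_cons_self with ha | ha
      · exact hf a ha
      · obtain ⟨v, hv, hvlen, hvprod⟩ := hf _ ha
        exact ⟨_, hv.inv_reverse, by simpa using hvlen,
          by rw [← List.prod_inv_reverse, hvprod, map_inv, inv_inv]⟩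
    refine ⟨v ++ w, hv.append hw, ?_, by simp [hvprod, hwprod]⟩
    simp [hvlen, hwlen, Nat.mul_succ, Nat.add_comm]

theorem wordLength_map_le (f : G →* H) {S : Set G} {T : Set H} (hS : Subgroup.closure S = ⊤)
    {k : ℕ} (hf : ∀ s ∈ S, ∃ w, IsWordOver T w ∧ w.length = k ∧ w.prod = f s) (g : G) :
    wordLength T (f g) ≤ k * wordLength S g := by
  obtain ⟨l, hl, hlen, rfl⟩ := exists_isWordOver_length_eq_wordLength hS g
  obtain ⟨w, hw, hwlen, hwprod⟩ := exists_isWordOver_prod_eq_map_prod hf l hl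
  rw [← hlen, ← hwlen, ← hwprod]
  exact wordLength_prod_le_length hw

lemma wordLength_map_prod_le_countP [DecidableEq G] (π : H →* G) {S : Set G} {T : Set H}
    (hπ : ∀ t ∈ T, π t = 1 ∨ π t ∈ S) {L : List H} (hL : IsWordOver T L) :
    wordLength S (π L.prod) ≤ L.countP (fun x => π x != 1) := by
  have hword : IsWordOver S ((L.map π).filter (· != 1)) := by
    intro y hy
    obtain ⟨⟨x, hx, rfl⟩, hπx⟩ := And.imp_left List.mem_map.1 (List.mem_filter.1 hy)
    have hne : π x ≠ 1 := by simpa using hπx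
    rcases hL x hx with ht | ht
    · exact .inl ((hπ x ht).resolve_left hne)
    · exact .inr (by simpa using (hπ _ ht).resolve_left (by simpa using hne))
  have hprod : ((L.map π).filter (· != 1)).prod = π L.prod := by
    rw [List.prod_filter_bne_one, map_list_prod]
  calc wordLength S (π L.prod) ≤ ((L.map π).filter (· != 1)).length :=
        hprod ▸ wordLength_prod_le_length hword
    _ = L.countP (fun x => π x != 1) := by
        rw [← List.countP_eq_length_filter, List.countP_map]
        rfl

theorem card_mul_wordLength_le_wordLength_map {ι : Type*} [Fintype ι] (f : G →* H)
    (π : ι → H →* G) (hπf : ∀ j g, π j (f g) = g) {S : Set G} {T : Set H}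
    (hT : Subgroup.closure T = ⊤) (hπS : ∀ j, ∀ t ∈ T, π j t = 1 ∨ π j t ∈ S)
    (hπT : ∀ t ∈ T, ∀ i j, π i t ≠ 1 → π j t ≠ 1 → i = j) (g : G) :
    Fintype.card ι * wordLength S g ≤ wordLength T (f g) := by
  classical
  obtain ⟨L, hL, hlen, hprod⟩ := exists_isWordOver_length_eq_wordLength hT (f g)
  have hπL : ∀ x ∈ L, ∀ i j, π i x ≠ 1 → π j x ≠ 1 → i = j := by
    intro x hx
    rcases hL x hx with ht | ht
    · exact hπT x ht
    · simpa using hπT _ ht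
  calc Fintype.card ι * wordLength S g = ∑ j, wordLength S (π j L.prod) := by
        simp [hprod, hπf]
    _ ≤ ∑ j, L.countP (fun x => π j x != 1) :=
        Finset.sum_le_sum fun j _ => wordLength_map_prod_le_countP (π j) (hπS j) hL
    _ ≤ L.length := List.sum_countP_le_length _ (by simpa using hπL)
    _ = wordLength T (f g) := hlen

end WordLength

section BlockPresentation

variable {m C : ℕ} {S : Set (List (Fin m))}

lemma lift_ite_comp_blockβ {G : Type*} [Group G] (j : Fin C) (ψ : FreeGroup (Fin m) →* G) :
    (FreeGroup.lift fun p : Fin C × Fin m => if p.1 = j then ψ (.of p.2) else 1).comp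
      (blockβ m C) = ψ :=
  FreeGroup.ext_hom _ _ fun i => by
    simp [blockβ, blockA, map_list_prod, List.map_ofFn, Function.comp_def, List.prod_ofFn_ite_eq]

def blockProj (j : Fin C) : PresentedGroup (relSC m C S) →* PresentedGroup (relS m S) :=
  PresentedGroup.toGroup (f := fun p => if p.1 = j then PresentedGroup.of p.2 else 1) <| by
    rintro _ ⟨r, hr, rfl⟩
    exact (DFunLike.congr_fun (lift_ite_comp_blockβ j (PresentedGroup.mk _)) r).trans
      (PresentedGroup.one_of_mem hr)

lemma blockProj_of (j : Fin C) (p : Fin C × Fin m) :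
    blockProj (S := S) j (PresentedGroup.of p) = if p.1 = j then PresentedGroup.of p.2 else 1 :=
  PresentedGroup.toGroup.of _

lemma blockProj_of_eq_one_or_mem (j : Fin C) (p : Fin C × Fin m) :
    blockProj (S := S) j (PresentedGroup.of p) = 1 ∨
      blockProj (S := S) j (PresentedGroup.of p) ∈ Set.range PresentedGroup.of := by
  rw [blockProj_of]
  split_ifs <;> simp

lemma eq_of_blockProj_of_ne_one {j : Fin C} {p : Fin C × Fin m}
    (h : blockProj (S := S) j (PresentedGroup.of p) ≠ 1) : p.1 = j := by
  by_contra hne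
  simp [blockProj_of, hne] at h

lemma blockProj_apply_of_eq_prod {φ : PresentedGroup (relS m S) →* PresentedGroup (relSC m C S)}
    (hφ : ∀ i : Fin m, φ (PresentedGroup.of i) =
      (List.ofFn fun j : Fin C => (PresentedGroup.of (j, i) : PresentedGroup (relSC m C S))).prod)
    (j : Fin C) (q : PresentedGroup (relS m S)) : blockProj j (φ q) = q := by
  have hcomp : (blockProj j).comp φ = MonoidHom.id _ := PresentedGroup.ext fun i => by
    simp [hφ, map_list_prod, List.map_ofFn, Function.comp_def, blockProj_of,
      List.prod_ofFn_ite_eq]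
  exact DFunLike.congr_fun hcomp q

end BlockPresentation

theorem statement5_general (m C : ℕ)
    (S : Set (List (Fin m)))
    (φ : PresentedGroup (relS m S) →* PresentedGroup (relSC m C S))
    (hφ : ∀ i : Fin m, φ (PresentedGroup.of i) =
      (List.ofFn fun j : Fin C =>
        (PresentedGroup.of (j, i) : PresentedGroup (relSC m C S))).prod)
    (q : PresentedGroup (relS m S)) :
    wordLength (Set.range (PresentedGroup.of : Fin C × Fin m → PresentedGroup (relSC m C S)))
        (φ q) =
      C * wordLength (Set.range (PresentedGroup.of : Fin m → PresentedGroup (relS m S))) q := by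
  refine le_antisymm (wordLength_map_le φ (PresentedGroup.closure_range_of _) ?_ q) ?_
  · rintro _ ⟨i, rfl⟩
    refine ⟨_, ?_, List.length_ofFn, (hφ i).symm⟩
    intro x hx
    obtain ⟨j, rfl⟩ := List.mem_ofFn.1 hx
    exact .inl ⟨(j, i), rfl⟩
  · simpa using card_mul_wordLength_le_wordLength_map φ blockProj
      (blockProj_apply_of_eq_prod hφ) (PresentedGroup.closure_range_of _)
      (by rintro j _ ⟨p, rfl⟩; exact blockProj_of_eq_one_or_mem j p)
      (by rintro _ ⟨p, rfl⟩ i j hi hj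
          exact (eq_of_blockProj_of_ne_one hi).symm.trans (eq_of_blockProj_of_ne_one hj)) q

/-- **Lemma 3.4.**  For every `w ∈ Q`, `|φ(w)|_{Y_C} = C·|w|_Y`, where `φ : Q → Q_C` is
the homomorphism induced by `y_i ↦ A_i`. -/
theorem statement5 (m C : ℕ) (hm : 1 ≤ m) (hC : 1 ≤ C)
    (S : Set (List (Fin m))) (hS : ∀ s ∈ S, s ≠ [])
    (φ : PresentedGroup (relS m S) →* PresentedGroup (relSC m C S))
    (hφ : ∀ i : Fin m, φ (PresentedGroup.of i) =
      (List.ofFn fun j : Fin C =>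
        (PresentedGroup.of (j, i) : PresentedGroup (relSC m C S))).prod)
    (q : PresentedGroup (relS m S)) :
    wordLength (Set.range (PresentedGroup.of : Fin C × Fin m → PresentedGroup (relSC m C S)))
        (φ q) =
      C * wordLength (Set.range (PresentedGroup.of : Fin m → PresentedGroup (relS m S))) q :=
  statement5_general m C S φ hφ q
end

section
/- The subgroup Q̃ = φ(Q) of Q_C (the subgroup of Q_C generated by the images of A_1, …, A_m) is malnormal in Q_C: for every h ∈ Q_C with h ∉ φ(Q), one has h^{-1}·φ(Q)·h ∩ φ(Q) = {1}. -/
def Subgroup.IsMalnormal {G : Type*} [Group G] (H : Subgroup G) : Prop :=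
  ∀ g ∉ H, ∀ h ∈ H, g⁻¹ * h * g ∈ H → h = 1

theorem Subgroup.IsMalnormal.comap {G K : Type*} [Group G] [Group K] {H : Subgroup K}
    (hH : H.IsMalnormal) {f : G →* K} (hf : Function.Injective f) :
    (H.comap f).IsMalnormal :=
  fun g hg h hh hconj => hf <| by
    rw [map_one]
    exact hH (f g) hg (f h) hh (by simpa using hconj)

namespace Monoid.CoprodI

variable {ι : Type*} {G : ι → Type*} [∀ i, Group (G i)]

namespace Word

variable [DecidableEq ι] [∀ i, DecidableEq (G i)]

theorem prod_injective : Function.Injective (prod : Word G → CoprodI G) :=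
  equiv.symm.injective

def ofInfix (w : Word G) {l : List (Σ i, G i)} (hl : l <:+: w.toList) : Word G :=
  ⟨l, fun a ha => w.ne_one a (hl.subset ha), w.chain_ne.infix hl⟩

theorem of_mul_prod_ne_prod_mul_of {i : ι} {x y : G i} (hx : x ≠ 1) (hy : y ≠ 1) {w : Word G}
    (hw : w.toList ≠ []) (hfst : w.fstIdx ≠ some i)
    (hlast : ∀ a ∈ w.toList.getLast?, a.1 ≠ i) :
    of x * w.prod ≠ w.prod * of y := by
  intro h
  let wy : Word G := ⟨w.toList ++ [⟨i, y⟩],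
    by simpa [or_imp, forall_and] using ⟨w.ne_one, hy⟩,
    List.isChain_append.2 ⟨w.chain_ne, List.isChain_singleton _, by simpa using hlast⟩⟩
  have hxy : cons x w hfst hx = wy := prod_injective <| by
    simpa [prod, wy] using h
  obtain ⟨a, l, hal⟩ := List.exists_cons_of_ne_nil hw
  have hhead : (⟨i, x⟩ : Σ i, G i) = a := by
    simpa [wy, hal] using congrArg (·.toList.head?) hxy
  exact fstIdx_ne_iff.1 hfst a (by simp [hal]) (congrArg Sigma.fst hhead)

theorem eq_one_of_of_mul_prod_eq_prod_mul_of {i : ι} {x y : G i} (w : Word G)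
    (hw : w.prod ∉ (of : G i →* CoprodI G).range) (h : of x * w.prod = w.prod * of y) :
    x = 1 := by
  induction hn : w.toList.length using Nat.strong_induction_on generalizing w x y with
  | _ n ih =>
  by_contra hx
  have hy : y ≠ 1 := by
    rintro rfl
    exact hx (of_injective i (by simpa using h))
  rcases hl : w.toList with _ | ⟨⟨k, z⟩, l⟩
  · exact hw ⟨1, by simp [prod, hl]⟩
  obtain rfl | hk := eq_or_ne k i
  · let w' := w.ofInfix (l := l) ⟨[⟨k, z⟩], [], by simp [hl]⟩
    have hprod : w.prod = of z * w'.prod := by simp [prod, hl, w', ofInfix]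
    have hw' : w'.prod ∉ (of : G k →* CoprodI G).range := by
      rintro ⟨c, hc⟩
      exact hw ⟨z * c, by simp [hprod, hc]⟩
    have h' : of (z⁻¹ * x * z) * w'.prod = w'.prod * of y := by
      rw [hprod, mul_assoc] at h
      rw [map_mul, map_mul, map_inv, mul_assoc, mul_assoc, h, inv_mul_cancel_left]
    have := ih l.length (by simp [← hn, hl]) w' hw' h' rfl
    exact hx ((conj_eq_one_iff (a := z⁻¹)).1 (by rwa [inv_inv]))
  obtain ⟨l', ⟨k', z'⟩, hl'⟩ := w.toList.eq_nil_or_concat.resolve_left (by simp [hl])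
  obtain rfl | hk' := eq_or_ne k' i
  · let w' := w.ofInfix (l := l') ⟨[], [⟨k', z'⟩], by simp [hl']⟩
    have hprod : w.prod = w'.prod * of z' := by simp [prod, hl', w', ofInfix]
    have hw' : w'.prod ∉ (of : G k' →* CoprodI G).range := by
      rintro ⟨c, hc⟩
      exact hw ⟨c * z', by simp [hprod, hc]⟩
    have h' : of x * w'.prod = w'.prod * of (z' * y * z'⁻¹) := by
      rw [hprod, ← mul_assoc] at h
      rw [map_mul, map_mul, map_inv, ← mul_assoc, ← mul_assoc, ← h, mul_inv_cancel_right]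
    exact hx (ih l'.length (by simp [← hn, hl']) w' hw' h' rfl)
  exact of_mul_prod_ne_prod_mul_of hx hy (by simp [hl]) (by simp [fstIdx, hl, hk])
    (by simp [hl', hk']) h

end Word

theorem isMalnormal_range_of (i : ι) : (of : G i →* CoprodI G).range.IsMalnormal := by
  classical
  rintro g hg _ ⟨x, rfl⟩ ⟨y, hy⟩
  have hgw : (Word.equiv g).prod = g := Word.equiv.symm_apply_apply g
  rw [← hgw] at hg hy
  refine (map_eq_one_iff _ (of_injective i)).2
    (Word.eq_one_of_of_mul_prod_eq_prod_mul_of (y := y) _ hg ?_)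
  simp [hy, mul_assoc]

end Monoid.CoprodI

universe u

def boolFamily (G H : Type u) (b : Bool) : Type u := cond b G H

instance {G H : Type u} [Group G] [Group H] : ∀ b, Group (boolFamily G H b)
  | true => ‹Group G›
  | false => ‹Group H›

namespace BlockPresentation

variable {m C : ℕ} {rels : Set (FreeGroup (Fin m))}

variable (m C rels) in
abbrev blockHom : PresentedGroup rels →* PresentedGroup (blockβ m C '' rels) :=
  PresentedGroup.map (blockβ m C) (Set.mapsTo_image _ _)

theorem mk_blockA (i : Fin m) (rels' : Set (FreeGroup (Fin C × Fin m))) :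
    PresentedGroup.mk rels' (blockA m C i) =
      (List.ofFn fun j => PresentedGroup.of (j, i)).prod := by
  rw [blockA, map_list_prod, List.map_ofFn]
  rfl

theorem blockHom_of (i : Fin m) :
    blockHom m C rels (PresentedGroup.of i) =
      (List.ofFn fun j => PresentedGroup.of (j, i)).prod := by
  rw [← mk_blockA]
  exact congrArg (PresentedGroup.mk _) (FreeGroup.lift_apply_of ..)

variable (m C rels) in
abbrev FreeProduct :=
  Monoid.CoprodI (boolFamily (PresentedGroup rels) (FreeGroup (Fin C × Fin m)))

variable (m C rels) in
def inl : PresentedGroup rels →* FreeProduct m C rels :=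
  Monoid.CoprodI.of (M := boolFamily (PresentedGroup rels) (FreeGroup (Fin C × Fin m))) (i := true)

variable (m C rels) in
def inr : FreeGroup (Fin C × Fin m) →* FreeProduct m C rels :=
  Monoid.CoprodI.of (M := boolFamily (PresentedGroup rels) (FreeGroup (Fin C × Fin m)))
    (i := false)

variable (m C rels) in
/-- The letter `(j, i)` of the free factor stands for the generator `(j + 1, i)` of `Q_{C+1}`;
the generator `(0, i)` is recovered as `A_i` times the inverse of the rest of the block. -/
def tietzeGen (p : Fin (C + 1) × Fin m) : FreeProduct m C rels :=
  Fin.cases (inl m C rels (.of p.2) * (inr m C rels (blockA m C p.2))⁻¹)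
    (fun j => inr m C rels (.of (j, p.2))) p.1

theorem lift_tietzeGen_blockA (i : Fin m) :
    FreeGroup.lift (tietzeGen m C rels) (blockA m (C + 1) i) = inl m C rels (.of i) := by
  simp [blockA, map_list_prod, List.map_ofFn, List.ofFn_succ, Function.comp_def, tietzeGen]

theorem lift_tietzeGen_comp_blockβ :
    (FreeGroup.lift (tietzeGen m C rels)).comp (blockβ m (C + 1)) =
      (inl m C rels).comp (PresentedGroup.mk rels) :=
  FreeGroup.ext_hom _ _ fun i => by
    simp only [MonoidHom.comp_apply, blockβ, FreeGroup.lift_apply_of]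
    exact lift_tietzeGen_blockA i

variable (m C rels) in
def tietze : PresentedGroup (blockβ m (C + 1) '' rels) →* FreeProduct m C rels :=
  PresentedGroup.toGroup (f := tietzeGen m C rels) <| by
    rintro _ ⟨r, hr, rfl⟩
    rw [← MonoidHom.comp_apply, lift_tietzeGen_comp_blockβ, MonoidHom.comp_apply,
      PresentedGroup.one_of_mem hr, map_one]

@[simp]
theorem tietze_of (p : Fin (C + 1) × Fin m) : tietze m C rels (.of p) = tietzeGen m C rels p :=
  PresentedGroup.toGroup.of _

theorem tietze_comp_blockHom :
    (tietze m C rels).comp (blockHom m (C + 1) rels) = inl m C rels :=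
  PresentedGroup.ext fun i => by
    change tietze m C rels (PresentedGroup.mk _ (blockβ m (C + 1) (.of i))) = _
    simp only [blockβ, FreeGroup.lift_apply_of]
    exact lift_tietzeGen_blockA i

variable (m C rels) in
def untietzeFactor : ∀ b, boolFamily (PresentedGroup rels) (FreeGroup (Fin C × Fin m)) b →*
    PresentedGroup (blockβ m (C + 1) '' rels)
  | true => blockHom m (C + 1) rels
  | false => FreeGroup.lift fun p => .of (p.1.succ, p.2)

variable (m C rels) in
def untietze : FreeProduct m C rels →* PresentedGroup (blockβ m (C + 1) '' rels) :=
  Monoid.CoprodI.lift (untietzeFactor m C rels)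

@[simp]
theorem untietze_inl (q : PresentedGroup rels) :
    untietze m C rels (inl m C rels q) = blockHom m (C + 1) rels q :=
  Monoid.CoprodI.lift_of _ _

@[simp]
theorem untietze_inr (x : FreeGroup (Fin C × Fin m)) :
    untietze m C rels (inr m C rels x) = FreeGroup.lift (fun p => .of (p.1.succ, p.2)) x :=
  Monoid.CoprodI.lift_of _ _

theorem untietze_comp_tietze : (untietze m C rels).comp (tietze m C rels) = .id _ := by
  refine PresentedGroup.ext fun ⟨j, i⟩ => ?_
  cases j using Fin.cases with
  | zero => simp [tietzeGen, blockHom_of, blockA, map_list_prod, List.ofFn_succ, Function.comp_def]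
  | succ j => simp [tietzeGen]

theorem tietze_comp_untietze : (tietze m C rels).comp (untietze m C rels) = .id _ := by
  refine Monoid.CoprodI.ext_hom _ _ fun b => ?_
  cases b with
  | true => exact tietze_comp_blockHom
  | false =>
    refine FreeGroup.ext_hom _ _ fun p => ?_
    change tietze m C rels (untietze m C rels (inr m C rels (.of p))) = inr m C rels (.of p)
    simp [tietzeGen]

variable (m C rels) in
def tietzeEquiv : PresentedGroup (blockβ m (C + 1) '' rels) ≃* FreeProduct m C rels :=
  (tietze m C rels).toMulEquiv (untietze m C rels) untietze_comp_tietze tietze_comp_untietze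

theorem range_blockHom :
    (blockHom m (C + 1) rels).range =
      (inl m C rels).range.comap (tietzeEquiv m C rels).toMonoidHom := by
  rw [← tietze_comp_blockHom, MonoidHom.range_comp]
  exact (Subgroup.comap_map_eq_self_of_injective (tietzeEquiv m C rels).injective _).symm

theorem isMalnormal_range_blockHom : (blockHom m (C + 1) rels).range.IsMalnormal := by
  rw [range_blockHom]
  exact (Monoid.CoprodI.isMalnormal_range_of true).comap (tietzeEquiv m C rels).injective

end BlockPresentation

theorem statement6_general (m C : ℕ) (hC : 1 ≤ C)
    (S : Set (List (Fin m)))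
    (φ : PresentedGroup (relS m S) →* PresentedGroup (relSC m C S))
    (hφ : ∀ i : Fin m, φ (PresentedGroup.of i) =
      (List.ofFn fun j : Fin C =>
        (PresentedGroup.of (j, i) : PresentedGroup (relSC m C S))).prod) :
    ∀ h : PresentedGroup (relSC m C S), h ∉ φ.range →
      ∀ g : PresentedGroup (relSC m C S), g ∈ φ.range →
        h⁻¹ * g * h ∈ φ.range → g = 1 := by
  obtain ⟨C, rfl⟩ : ∃ C', C = C' + 1 := ⟨C - 1, by omega⟩
  obtain rfl : φ = BlockPresentation.blockHom m (C + 1) (relS m S) :=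
    PresentedGroup.ext fun i => (hφ i).trans (BlockPresentation.blockHom_of i).symm
  exact BlockPresentation.isMalnormal_range_blockHom

/-- **Lemma 3.5.**  The subgroup `Q̃ = φ(Q)` of `Q_C` is malnormal in `Q_C`: for every
`h ∈ Q_C` with `h ∉ φ(Q)`, one has `h⁻¹·φ(Q)·h ∩ φ(Q) = {1}`. -/
theorem statement6 (m C : ℕ) (hm : 1 ≤ m) (hC : 1 ≤ C)
    (S : Set (List (Fin m))) (hS : ∀ s ∈ S, s ≠ [])
    (φ : PresentedGroup (relS m S) →* PresentedGroup (relSC m C S))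
    (hφ : ∀ i : Fin m, φ (PresentedGroup.of i) =
      (List.ofFn fun j : Fin C =>
        (PresentedGroup.of (j, i) : PresentedGroup (relSC m C S))).prod) :
    ∀ h : PresentedGroup (relSC m C S), h ∉ φ.range →
      ∀ g : PresentedGroup (relSC m C S), g ∈ φ.range →
        h⁻¹ * g * h ∈ φ.range → g = 1 :=
  statement6_general m C hC S φ hφ
end

section
/- For all pairs (y₁,a₁), (y₂,a₂) ∈ (𝒜 ⊔ ℬ) × 𝒜 and all ε₁, ε₂ ∈ {±1}, either (y₁,a₁) = (y₂,a₂) and ε₁ = -ε₂, or fewer than D/4 letters of each factor cancel in the product v(y₁,a₁)^{ε₁}·v(y₂,a₂)^{ε₂}; that is, the reduced length of v(y₁,a₁)^{ε₁}·v(y₂,a₂)^{ε₂} is greater than 3D/2. In particular, the family (v(y,a)) indexed by (y,a) ∈ (𝒜 ⊔ ℬ) × 𝒜 is a basis of a free subgroup of F(ℬ): the homomorphism from the free group on (𝒜 ⊔ ℬ) × 𝒜 to F(ℬ) sending (y,a) to v(y,a) is injective. -/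
/-- The alphabet `𝒜₁ ⊔ ℬ` (also used as the index set `𝒜 ⊔ ℬ`): `Sum.inl a` is the
letter `a₁ ∈ 𝒜₁` (resp. the index `a ∈ 𝒜`), and `Sum.inr i` encodes `b₁, b₂ ∈ ℬ`. -/
abbrev MLetter (n : ℕ) := Sum (Fin n) (Fin 2)

/-- `D = 4n(n+2)`. -/
def Dconst (n : ℕ) : ℕ := 4 * n * (n + 2)

/-- `b₁`. -/
def bb1 (n : ℕ) : FreeGroup (MLetter n) := FreeGroup.of (Sum.inr 0)

/-- `b₂`. -/
def bb2 (n : ℕ) : FreeGroup (MLetter n) := FreeGroup.of (Sum.inr 1)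

/-- `k = η(y,a)`, normalized to lie in `{1, …, n(n+2) = D/4}`. -/
def kVal (n : ℕ) (η : MLetter n × Fin n ≃ Fin (n * (n + 2))) (y : MLetter n) (a : Fin n) :
    ℕ :=
  (η (y, a)).val + 1

/-- `v(y,a) = b₁^k (b₂b₁)^{(D-2k)/2} b₂^k`, a reduced word of length `D` in `F(ℬ)`. -/
def vWord (n : ℕ) (η : MLetter n × Fin n ≃ Fin (n * (n + 2))) (y : MLetter n) (a : Fin n) :
    FreeGroup (MLetter n) :=
  bb1 n ^ kVal n η y a * (bb2 n * bb1 n) ^ (2 * n * (n + 2) - kVal n η y a) *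
    bb2 n ^ kVal n η y a

/-- `w^ε` for a sign `ε : Bool` (`true ↦ w`, `false ↦ w⁻¹`). -/
def bpow {α : Type*} (w : FreeGroup α) (ε : Bool) : FreeGroup α := if ε then w else w⁻¹

/-- The letter map of the automorphism `φ_y^{ε}`. -/
def phiAux (n : ℕ) (η : MLetter n × Fin n ≃ Fin (n * (n + 2))) (y : MLetter n) (ε : Bool) :
    MLetter n → FreeGroup (MLetter n)
  | Sum.inl a => bpow (vWord n η y a) ε * FreeGroup.of (Sum.inl a)
  | Sum.inr i => FreeGroup.of (Sum.inr i)

/-- The automorphism `φ_y^{ε}` of `F(𝒜₁ ⊔ ℬ)`: it fixes `ℬ` pointwise and sends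
`a₁ ↦ v(y,a) a₁` (for `ε = +1`), resp. `a₁ ↦ v(y,a)⁻¹ a₁` (for `ε = -1`). -/
def phiM (n : ℕ) (η : MLetter n × Fin n ≃ Fin (n * (n + 2))) (y : MLetter n) (ε : Bool) :
    FreeGroup (MLetter n) →* FreeGroup (MLetter n) :=
  FreeGroup.lift (phiAux n η y ε)

/-- The map `ρ_y^{ε}`: `ρ_y^{+1}(w) = φ_y(w)·y⁻¹` (with `y` read as the letter `a₁`
when `y = a ∈ 𝒜`), `ρ_{b_i}^{-1}(w) = φ_{b_i}^{-1}(w)·b_i`, and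
`ρ_a^{-1}(w) = φ_a^{-1}(w)·v(a,a)⁻¹a₁`. -/
def rhoM (n : ℕ) (η : MLetter n × Fin n ≃ Fin (n * (n + 2))) (y : MLetter n) (ε : Bool)
    (w : FreeGroup (MLetter n)) : FreeGroup (MLetter n) :=
  if ε then phiM n η y true w * (FreeGroup.of y)⁻¹
  else
    match y with
    | Sum.inl a =>
        phiM n η (Sum.inl a) false w * (vWord n η (Sum.inl a) a)⁻¹ *
          FreeGroup.of (Sum.inl a)
    | Sum.inr i => phiM n η (Sum.inr i) false w * FreeGroup.of (Sum.inr i)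

/-- `‖w‖`: the length of the reduced word of `w`. -/
def rlen (n : ℕ) (w : FreeGroup (MLetter n)) : ℕ := (FreeGroup.toWord w).length

/-- `|w|_𝒜`: the number of `𝒜₁^{±1}`-letters in the reduced word of `w`. -/
def aCount (n : ℕ) (w : FreeGroup (MLetter n)) : ℕ :=
  ((FreeGroup.toWord w).filter fun p => p.1.isLeft).length

/-- The `𝒜`-projection `δ(w)`: delete the `ℬ^{±1}`-letters of the reduced word of `w`
and replace each `a₁^{±1}` by `a^{±1}`. -/
def aProj (n : ℕ) (w : FreeGroup (MLetter n)) : List (Fin n × Bool) :=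
  (FreeGroup.toWord w).filterMap fun p =>
    Sum.elim (fun a => some (a, p.2)) (fun _ => none) p.1

/-- `w ∈ F(ℬ)`. -/
def IsBWord (n : ℕ) (w : FreeGroup (MLetter n)) : Prop :=
  ∀ p ∈ FreeGroup.toWord w, (p.1).isRight = true

/-- The product `u₀ x₁^{δ₁} u₁ x₂^{δ₂} ⋯ u_{k-1} x_k^{δ_k} u_k`
(with `0`-based indexing of `u`, `x`, `d`). -/
def wordProd (n : ℕ) (k : ℕ) (u : ℕ → FreeGroup (MLetter n)) (x : ℕ → Fin n)
    (d : ℕ → Bool) : FreeGroup (MLetter n) :=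
  ((List.range k).map fun i => u i * bpow (FreeGroup.of (Sum.inl (x i))) (d i)).prod * u k

/-- A computation: `w_{i+1} = ρ_{y_i}^{ε_i}(w_i)` for all `i < t`. -/
def IsComputation (n : ℕ) (η : MLetter n × Fin n ≃ Fin (n * (n + 2))) (t : ℕ)
    (y : ℕ → MLetter n) (e : ℕ → Bool) (w : ℕ → FreeGroup (MLetter n)) : Prop :=
  ∀ i < t, w (i + 1) = rhoM n η (y i) (e i) (w i)

/-- A semi-computation: `w_{i+1} = φ_{y_i}^{ε_i}(w_i)` for all `i < t`. -/
def IsSemiComputation (n : ℕ) (η : MLetter n × Fin n ≃ Fin (n * (n + 2))) (t : ℕ)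
    (y : ℕ → MLetter n) (e : ℕ → Bool) (w : ℕ → FreeGroup (MLetter n)) : Prop :=
  ∀ i < t, w (i + 1) = phiM n η (y i) (e i) (w i)

/-- The history `y₁^{ε₁} ⋯ y_t^{ε_t}` is a reduced word: there is no `i` with
`y_{i+1} = y_i` and `ε_{i+1} = -ε_i`. -/
def ReducedHistory (n : ℕ) (t : ℕ) (y : ℕ → MLetter n) (e : ℕ → Bool) : Prop :=
  ∀ i, i + 1 < t → ¬(y (i + 1) = y i ∧ e (i + 1) = !e i)

/-- A rear shift of `w 0`: a computation with reduced history such that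
`|w₀|_𝒜 = ⋯ = |w_{t-1}|_𝒜 = |w_t|_𝒜 + 1`. -/
def IsRearShift (n : ℕ) (η : MLetter n × Fin n ≃ Fin (n * (n + 2))) (t : ℕ)
    (y : ℕ → MLetter n) (e : ℕ → Bool) (w : ℕ → FreeGroup (MLetter n)) : Prop :=
  1 ≤ t ∧ IsComputation n η t y e w ∧ ReducedHistory n t y e ∧
    ∀ i < t, aCount n (w i) = aCount n (w t) + 1

/-- A shift of `w 0`: a computation with reduced history ending at the empty word. -/
def IsShift (n : ℕ) (η : MLetter n × Fin n ≃ Fin (n * (n + 2))) (t : ℕ)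
    (y : ℕ → MLetter n) (e : ℕ → Bool) (w : ℕ → FreeGroup (MLetter n)) : Prop :=
  IsComputation n η t y e w ∧ ReducedHistory n t y e ∧ w t = 1

/-- A reduced word is cyclically reduced if its first letter is not the inverse
of its last letter. -/
def CyclicallyReducedWord {α : Type*} (l : List (α × Bool)) : Prop :=
  ∀ a ∈ l.head?, ∀ b ∈ l.getLast?, a ≠ (b.1, !b.2)

/-!
As reduced words, `v(y,a) = b₁ᵏ (b₂b₁)ᵐ b₂ᵏ` and `v(y,a)⁻¹ = b₂⁻ᵏ (b₁⁻¹b₂⁻¹)ᵐ b₁⁻ᵏ`, where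
`k = η(y,a) ≤ D/4` and `m = D/2 - k ≥ 1`. Multiply `v(y,a)^ε` by a reduced word beginning with
the first `k' + 1` letters of `v(y',a')^ε'`. For `ε = ε'` nothing cancels; for `ε ≠ ε'` only
`b₂ᵏ · b₂⁻ᵏ'` (resp. `b₁⁻ᵏ · b₁ᵏ'`) cancels, that is `min(k, k') < D/4` letters on each side,
since `k ≠ k'` unless `(y,a) = (y',a')`. This gives the length bound, and shows that the first
`k + 1` letters of `v(y,a)^ε` survive; by induction the image of a nontrivial reduced word begins
with such a prefix, so it is nontrivial.
-/

namespace FreeGroup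

variable {α : Type*}

theorem isReduced_of_forall_snd_eq {L : List (α × Bool)} {s : Bool} (h : ∀ z ∈ L, z.2 = s) :
    IsReduced L :=
  (List.pairwise_of_forall_mem_list (r := fun x y : α × Bool => x.1 = y.1 → x.2 = y.2)
    fun x hx y hy _ => (h x hx).trans (h y hy).symm).isChain

theorem mk_replicate_mul_mk_replicate_not (x : α) (s : Bool) (k k' : ℕ) :
    mk (List.replicate k (x, s)) * mk (List.replicate k' (x, !s)) =
      mk (List.replicate (k - k') (x, s)) * mk (List.replicate (k' - k) (x, !s)) := by
  have hpow (j : ℕ) : mk (List.replicate j (x, s)) = mk [(x, s)] ^ j := by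
    rw [pow_mk, List.flatten_replicate_singleton]
  have hinv (j : ℕ) : mk (List.replicate j (x, !s)) = (mk [(x, s)])⁻¹ ^ j := by
    rw [inv_mk, pow_mk]; exact congrArg mk List.flatten_replicate_singleton.symm
  rw [hpow, hpow, hinv, hinv]
  generalize mk [(x, s)] = g
  rcases le_total k k' with h | h
  · obtain ⟨d, rfl⟩ := Nat.exists_eq_add_of_le h
    simp [pow_add]
  · obtain ⟨d, rfl⟩ := Nat.exists_eq_add_of_le' h
    simp [pow_add, mul_assoc]

theorem isReduced_append_of_fst_ne {L₁ L₂ : List (α × Bool)} (h₁ : IsReduced L₁)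
    (h₂ : IsReduced L₂) (h : ∀ x ∈ L₁.getLast?, ∀ y ∈ L₂.head?, x.1 ≠ y.1) :
    IsReduced (L₁ ++ L₂) :=
  List.isChain_append.mpr ⟨h₁, h₂, fun x hx y hy hxy => absurd hxy (h x hx y hy)⟩

theorem toWord_mk_of_isReduced [DecidableEq α] {L : List (α × Bool)} (h : IsReduced L) :
    (mk L).toWord = L := by
  rw [toWord_mk, h.reduce_eq]

def zigzag (a b : α) (s : Bool) (k m : ℕ) : List (α × Bool) :=
  List.replicate k (a, s) ++ (List.replicate m [(b, s), (a, s)]).flatten ++ List.replicate k (b, s)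

section Zigzag

variable {a b : α} {s : Bool} {k m : ℕ}

theorem snd_of_mem_zigzag {z : α × Bool} (hz : z ∈ zigzag a b s k m) : z.2 = s := by
  simp only [zigzag, List.mem_append, List.mem_replicate, List.mem_flatten] at hz
  aesop

theorem isReduced_zigzag : IsReduced (zigzag a b s k m) :=
  isReduced_of_forall_snd_eq fun _ => snd_of_mem_zigzag

theorem length_zigzag : (zigzag a b s k m).length = 2 * k + 2 * m := by
  simp only [zigzag, List.length_append, List.length_replicate, List.length_flatten,
    List.map_replicate, List.length_cons, List.length_nil, List.sum_replicate, smul_eq_mul]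
  ring

theorem invRev_zigzag : invRev (zigzag a b s k m) = zigzag b a (!s) k m := by
  simp [zigzag, invRev, List.reverse_flatten]

theorem mk_zigzag : mk (zigzag a b true k m) = of a ^ k * (of b * of a) ^ m * of b ^ k := by
  simp only [zigzag, of, mul_mk, pow_mk, List.flatten_replicate_singleton]; rfl

theorem replicate_append_singleton_prefix (T : List (α × Bool)) :
    List.replicate k (a, s) ++ [(b, s)] <+:
      List.replicate k (a, s) ++ (List.replicate (m + 1) [(b, s), (a, s)]).flatten ++ T :=
  ⟨(a, s) :: ((List.replicate m [(b, s), (a, s)]).flatten ++ T), by simp [List.replicate_succ]⟩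

theorem isReduced_zigzag_append {L : List (α × Bool)} (hL : IsReduced ((a, s) :: L)) :
    IsReduced (zigzag a b s k m ++ (a, s) :: L) := by
  refine List.isChain_append.mpr ⟨isReduced_zigzag, hL, fun x hx y hy _ => ?_⟩
  obtain rfl : y = (a, s) := by simpa [eq_comm] using hy
  exact snd_of_mem_zigzag (List.mem_of_getLast? hx)

theorem toWord_mk_zigzag_mul [DecidableEq α] {k' : ℕ} (hab : a ≠ b) (hk : k ≠ k')
    {R : List (α × Bool)} (hR : IsReduced ((a, !s) :: R)) :
    (mk (zigzag a b s k (m + 1)) * mk (List.replicate k' (b, !s) ++ (a, !s) :: R)).toWord =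
      List.replicate k (a, s) ++ (List.replicate (m + 1) [(b, s), (a, s)]).flatten ++
        (List.replicate (k - k') (b, s) ++ List.replicate (k' - k) (b, !s)) ++ (a, !s) :: R := by
  have hmk : mk (zigzag a b s k (m + 1)) * mk (List.replicate k' (b, !s) ++ (a, !s) :: R) =
      mk (List.replicate k (a, s) ++ (List.replicate (m + 1) [(b, s), (a, s)]).flatten ++
        (List.replicate (k - k') (b, s) ++ List.replicate (k' - k) (b, !s)) ++ (a, !s) :: R) := by
    simp only [zigzag, ← mul_mk, mul_assoc]
    rw [← mul_assoc (mk (List.replicate k (b, s))), mk_replicate_mul_mk_replicate_not, mul_assoc]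
  rw [hmk, toWord_mk_of_isReduced]
  have hhead :
      IsReduced (List.replicate k (a, s) ++ (List.replicate (m + 1) [(b, s), (a, s)]).flatten) :=
    (isReduced_zigzag (a := a) (b := b) (s := s) (k := k) (m := m + 1)).infix
      ⟨[], List.replicate k (b, s), by simp [zigzag]⟩
  have hlast : (List.replicate k (a, s) ++
      (List.replicate (m + 1) [(b, s), (a, s)]).flatten).getLast? = some (a, s) := by
    simp [List.replicate_succ', List.getLast?_append]
  have hmid (t : Bool) (d : ℕ) :
      IsReduced (List.replicate k (a, s) ++ (List.replicate (m + 1) [(b, s), (a, s)]).flatten ++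
        List.replicate (d + 1) (b, t) ++ (a, !s) :: R) := by
    refine isReduced_append_of_fst_ne (isReduced_append_of_fst_ne hhead
      (isReduced_of_forall_snd_eq (s := t) (by simp)) ?_) hR ?_
    · simp [hlast, List.head?_replicate, hab]
    · simp [List.getLast?_replicate, Ne.symm hab]
  rcases lt_or_gt_of_ne hk with h | h
  · obtain ⟨d, hd⟩ : ∃ d, k' - k = d + 1 := ⟨k' - k - 1, by omega⟩
    simpa [Nat.sub_eq_zero_of_le h.le, hd] using hmid (!s) d
  · obtain ⟨d, hd⟩ : ∃ d, k - k' = d + 1 := ⟨k - k' - 1, by omega⟩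
    simpa [Nat.sub_eq_zero_of_le h.le, hd] using hmid s d

end Zigzag

variable {ι : Type*} {f : ι → FreeGroup α}

theorem lift_mk_cons (i : ι) (e : Bool) (L : List (ι × Bool)) :
    lift f (mk ((i, e) :: L)) = bpow (f i) e * lift f (mk L) := by
  cases e <;> simp [lift_mk, bpow]

variable [DecidableEq α]

theorem prefix_toWord_lift_mk_cons (P : ι → Bool → List (α × Bool))
    (hbase : ∀ i e, P i e <+: (bpow (f i) e).toWord)
    (hstep : ∀ i e j e' (w : FreeGroup α), ¬(j = i ∧ e' = !e) → P j e' <+: w.toWord →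
      P i e <+: (bpow (f i) e * w).toWord)
    (L : List (ι × Bool)) (i : ι) (e : Bool) (hL : IsReduced ((i, e) :: L)) :
    P i e <+: (lift f (mk ((i, e) :: L))).toWord := by
  induction L generalizing i e with
  | nil => rw [lift_mk_cons, ← one_eq_mk, _root_.map_one, mul_one]; exact hbase i e
  | cons x L ih =>
    obtain ⟨j, e'⟩ := x
    rw [lift_mk_cons]
    refine hstep i e j e' _ (fun ⟨hji, he'⟩ => ?_) (ih j e' hL.of_cons)
    simpa [he'] using (isReduced_cons_cons.mp hL).1 hji.symm

theorem lift_injective_of_prefix (P : ι → Bool → List (α × Bool)) (hP : ∀ i e, P i e ≠ [])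
    (hbase : ∀ i e, P i e <+: (bpow (f i) e).toWord)
    (hstep : ∀ i e j e' (w : FreeGroup α), ¬(j = i ∧ e' = !e) → P j e' <+: w.toWord →
      P i e <+: (bpow (f i) e * w).toWord) :
    Function.Injective (lift f) := by
  classical
  refine (injective_iff_map_eq_one (lift f)).mpr fun g hg => ?_
  rcases hw : g.toWord with _ | ⟨⟨i, e⟩, L⟩
  · exact toWord_eq_nil_iff.mp hw
  · have hL : IsReduced ((i, e) :: L) := hw ▸ isReduced_toWord
    have hpre := prefix_toWord_lift_mk_cons P hbase hstep L i e hL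
    rw [← hw, mk_toWord, hg, toWord_one, List.prefix_nil] at hpre
    exact absurd hpre (hP i e)

end FreeGroup

section VWord

open FreeGroup

variable {n : ℕ} (η : MLetter n × Fin n ≃ Fin (n * (n + 2)))

def bLetter (n : ℕ) (e : Bool) : MLetter n := Sum.inr (if e then 0 else 1)

theorem bLetter_ne_bLetter_not (e : Bool) : bLetter n e ≠ bLetter n (!e) := by
  cases e <;> simp [bLetter]

theorem kVal_le (p : MLetter n × Fin n) : kVal n η p.1 p.2 ≤ n * (n + 2) := (η p).is_lt

theorem kVal_injective : Function.Injective fun p : MLetter n × Fin n => kVal n η p.1 p.2 :=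
  fun _ _ h => η.injective (Fin.ext (Nat.succ_injective h))

theorem exists_two_mul_sub_kVal_eq_succ (p : MLetter n × Fin n) :
    ∃ m, 2 * n * (n + 2) - kVal n η p.1 p.2 = m + 1 :=
  ⟨2 * n * (n + 2) - kVal n η p.1 p.2 - 1, by
    have := kVal_le η p; have : 2 * n * (n + 2) = 2 * (n * (n + 2)) := by ring
    unfold kVal at *; omega⟩

def vPrefix (p : MLetter n × Fin n) (e : Bool) : List (MLetter n × Bool) :=
  List.replicate (kVal n η p.1 p.2) (bLetter n e, e) ++ [(bLetter n (!e), e)]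

theorem bpow_vWord (p : MLetter n × Fin n) (e : Bool) :
    bpow (vWord n η p.1 p.2) e = mk (zigzag (bLetter n e) (bLetter n (!e)) e
      (kVal n η p.1 p.2) (2 * n * (n + 2) - kVal n η p.1 p.2)) := by
  have hv : vWord n η p.1 p.2 = mk (zigzag (bLetter n true) (bLetter n false) true
      (kVal n η p.1 p.2) (2 * n * (n + 2) - kVal n η p.1 p.2)) := by
    rw [mk_zigzag]; rfl
  cases e
  · rw [bpow, if_neg Bool.false_ne_true, hv, inv_mk, invRev_zigzag]; rfl
  · exact hv

theorem toWord_bpow_vWord (p : MLetter n × Fin n) (e : Bool) :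
    (bpow (vWord n η p.1 p.2) e).toWord = zigzag (bLetter n e) (bLetter n (!e)) e
      (kVal n η p.1 p.2) (2 * n * (n + 2) - kVal n η p.1 p.2) := by
  rw [bpow_vWord, toWord_mk_of_isReduced isReduced_zigzag]

theorem rlen_bpow_vWord (p : MLetter n × Fin n) (e : Bool) :
    rlen n (bpow (vWord n η p.1 p.2) e) = Dconst n := by
  have := kVal_le η p
  have : 2 * n * (n + 2) = 2 * (n * (n + 2)) := by ring
  have : 4 * n * (n + 2) = 4 * (n * (n + 2)) := by ring
  rw [rlen, toWord_bpow_vWord, length_zigzag, Dconst]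
  omega

theorem vPrefix_prefix_toWord_bpow_vWord (p : MLetter n × Fin n) (e : Bool) :
    vPrefix η p e <+: (bpow (vWord n η p.1 p.2) e).toWord := by
  obtain ⟨m, hm⟩ := exists_two_mul_sub_kVal_eq_succ η p
  rw [toWord_bpow_vWord, hm]
  exact replicate_append_singleton_prefix _

/-- `c` is the number of letters cancelled from each factor. -/
theorem exists_toWord_bpow_vWord_mul {p q : MLetter n × Fin n} {e e' : Bool}
    (hpq : ¬(q = p ∧ e' = !e)) {R : List (MLetter n × Bool)}
    (hR : IsReduced (vPrefix η q e' ++ R)) :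
    ∃ W c, (bpow (vWord n η p.1 p.2) e * mk (vPrefix η q e' ++ R)).toWord = W ++ R ∧
      vPrefix η p e <+: W ∧ W.length + 2 * c = 4 * (n * (n + 2)) + (kVal n η q.1 q.2 + 1) ∧
      c < n * (n + 2) := by
  obtain ⟨m, hm⟩ := exists_two_mul_sub_kVal_eq_succ η p
  have hkp := kVal_le η p
  have hkq := kVal_le η q
  have h2 : 2 * n * (n + 2) = 2 * (n * (n + 2)) := by ring
  rw [bpow_vWord, hm]
  rcases Bool.eq_or_eq_not e' e with rfl | rfl
  · refine ⟨zigzag (bLetter n e') (bLetter n (!e')) e' (kVal n η p.1 p.2) (m + 1) ++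
      vPrefix η q e', 0, ?_, ?_, ?_, ?_⟩
    · rw [mul_mk, toWord_mk_of_isReduced, List.append_assoc]
      exact isReduced_zigzag_append hR
    · rw [zigzag, List.append_assoc (List.replicate _ _ ++ _)]
      exact replicate_append_singleton_prefix _
    · simp only [List.length_append, length_zigzag, vPrefix, List.length_replicate,
        List.length_singleton]
      omega
    · unfold kVal at hkp; omega
  · have hk : kVal n η p.1 p.2 ≠ kVal n η q.1 q.2 :=
      fun h => hpq ⟨(kVal_injective η h).symm, rfl⟩
    rw [vPrefix, Bool.not_not, List.append_assoc, List.singleton_append] at hR ⊢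
    set k := kVal n η p.1 p.2
    set k' := kVal n η q.1 q.2
    refine ⟨List.replicate k (bLetter n e, e) ++
      (List.replicate (m + 1) [(bLetter n (!e), e), (bLetter n e, e)]).flatten ++
      (List.replicate (k - k') (bLetter n (!e), e) ++
        List.replicate (k' - k) (bLetter n (!e), !e)) ++ [(bLetter n e, !e)],
      min k k', ?_, ?_, ?_, ?_⟩
    · rw [toWord_mk_zigzag_mul (bLetter_ne_bLetter_not e) hk
        (hR.infix (List.suffix_append _ _).isInfix)]
      exact List.append_cons _ _ _
    · rw [List.append_assoc (List.replicate _ _ ++ _)]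
      exact replicate_append_singleton_prefix _
    · simp only [List.append_assoc, List.length_append, List.length_replicate,
        List.length_flatten, List.map_replicate, List.length_cons, List.length_nil,
        List.sum_replicate, smul_eq_mul]
      omega
    · omega

theorem three_mul_Dconst_lt_two_mul_rlen {p q : MLetter n × Fin n} {e e' : Bool}
    (hpq : ¬(p = q ∧ e = !e')) :
    3 * Dconst n < 2 * rlen n (bpow (vWord n η p.1 p.2) e * bpow (vWord n η q.1 q.2) e') := by
  obtain ⟨R, hR⟩ := vPrefix_prefix_toWord_bpow_vWord η q e'
  have hlen := rlen_bpow_vWord η q e'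
  rw [← mk_toWord (x := bpow (vWord n η q.1 q.2) e'), ← hR]
  rw [rlen, ← hR, List.length_append] at hlen
  obtain ⟨W, c, hW, -, hWlen, hc⟩ := exists_toWord_bpow_vWord_mul η
    (fun h => hpq ⟨h.1.symm, by rw [h.2, Bool.not_not]⟩) (hR ▸ isReduced_toWord)
  have hD : Dconst n = 4 * (n * (n + 2)) := by unfold Dconst; ring
  simp only [vPrefix, List.length_append, List.length_replicate, List.length_singleton] at hlen
  rw [rlen, hW, List.length_append]
  omega

theorem lift_vWord_injective :
    Function.Injective (FreeGroup.lift fun p : MLetter n × Fin n => vWord n η p.1 p.2) := by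
  refine lift_injective_of_prefix (vPrefix η) (fun _ _ => by simp [vPrefix])
    (vPrefix_prefix_toWord_bpow_vWord η) fun p e q e' w hpq hw => ?_
  obtain ⟨R, hR⟩ := hw
  obtain ⟨W, -, hW, hpre, -⟩ := exists_toWord_bpow_vWord_mul η hpq (hR ▸ isReduced_toWord)
  rw [← mk_toWord (x := w), ← hR, hW]
  exact hpre.trans (List.prefix_append _ _)

end VWord

theorem statement7_general (n : ℕ) (η : MLetter n × Fin n ≃ Fin (n * (n + 2))) :
    (∀ (y₁ y₂ : MLetter n) (a₁ a₂ : Fin n) (e₁ e₂ : Bool),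
      ((y₁, a₁) = (y₂, a₂) ∧ e₁ = !e₂) ∨
        3 * Dconst n < 2 * rlen n (bpow (vWord n η y₁ a₁) e₁ * bpow (vWord n η y₂ a₂) e₂)) ∧
    Function.Injective
      (FreeGroup.lift (fun p : MLetter n × Fin n => vWord n η p.1 p.2) :
        FreeGroup (MLetter n × Fin n) →* FreeGroup (MLetter n)) :=
  ⟨fun y₁ y₂ a₁ a₂ _ _ => or_iff_not_imp_left.mpr
    (three_mul_Dconst_lt_two_mul_rlen η (p := (y₁, a₁)) (q := (y₂, a₂))),
    lift_vWord_injective η⟩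

/-- **Lemma 5.1.** For all `(y₁,a₁), (y₂,a₂)` and signs `ε₁, ε₂`: either
`(y₁,a₁) = (y₂,a₂)` with `ε₁ = -ε₂`, or fewer than `D/4` letters of each factor cancel
in `v(y₁,a₁)^{ε₁}·v(y₂,a₂)^{ε₂}`, i.e. the reduced length of the product exceeds
`3D/2`.  In particular the family `(v(y,a))` is a basis of a free subgroup of `F(ℬ)`. -/
theorem statement7 (n : ℕ) (hn : 0 < n) (η : MLetter n × Fin n ≃ Fin (n * (n + 2))) :
    (∀ (y₁ y₂ : MLetter n) (a₁ a₂ : Fin n) (e₁ e₂ : Bool),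
      ((y₁, a₁) = (y₂, a₂) ∧ e₁ = !e₂) ∨
        3 * Dconst n < 2 * rlen n (bpow (vWord n η y₁ a₁) e₁ * bpow (vWord n η y₂ a₂) e₂)) ∧
    Function.Injective
      (FreeGroup.lift (fun p : MLetter n × Fin n => vWord n η p.1 p.2) :
        FreeGroup (MLetter n × Fin n) →* FreeGroup (MLetter n)) :=
  statement7_general n η
end

section
/- For every w ∈ F(𝒜₁ ⊔ ℬ), every y ∈ 𝒜 ⊔ ℬ and every ε ∈ {±1}, δ(φ_y^{ε}(w)) coincides letter-for-letter with δ(w); equivalently, the subsequence of 𝒜₁^{±1}-letters of the reduced word of φ_y^{ε}(w) is identical to the subsequence of 𝒜₁^{±1}-letters of the reduced word of w. -/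
/-!
A reduced word of `F(𝒜₁ ⊔ ℬ)` is a product `u₀ x₁ u₁ ⋯ x_k u_k` of segments `u_i ∈ F(ℬ)`, each
spelled reduced, and letters `x_i ∈ 𝒜₁^{±1}`, subject only to `u_i ≠ 1` whenever
`x_{i+1} = x_i⁻¹`. Since `φ` fixes `F(ℬ)` and sends `a₁ ↦ v a₁`, `a₁⁻¹ ↦ a₁⁻¹ v⁻¹`, the image of
such a product is a product of the same shape with the same letters and segments
`u_i' = (1 or v⁻¹) u_i (v or 1)`. Where `x_{i+1} = x_i⁻¹` the new segment is `u_i` itself or the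
conjugate `v⁻¹ u_i v`, hence still nontrivial, so the new product is the reduced word of `φ(w)`.
-/

section Syllables

open FreeGroup

variable {α β : Type*} [DecidableEq β]

def inrWord (h : FreeGroup β) : List ((α ⊕ β) × Bool) :=
  (toWord h).map fun p => (Sum.inr p.1, p.2)

def leftLetters (l : List ((α ⊕ β) × Bool)) : List (α × Bool) :=
  l.filterMap fun p => Sum.elim (fun a => some (a, p.2)) (fun _ => none) p.1

def syllableWord : List (FreeGroup β × α × Bool) → FreeGroup β → List ((α ⊕ β) × Bool)
  | [], u => inrWord u
  | (h, x) :: s, u => inrWord h ++ (Sum.inl x.1, x.2) :: syllableWord s u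

def IsSeparated (s : List (FreeGroup β × α × Bool)) : Prop :=
  s.IsChain fun x y => y.1 = 1 → x.2.1 = y.2.1 → x.2.2 = y.2.2

theorem mk_inrWord (h : FreeGroup β) : mk (inrWord (α := α) h) = map Sum.inr h := by
  rw [inrWord, ← map.mk, mk_toWord]

theorem isReduced_inrWord (h : FreeGroup β) : IsReduced (inrWord (α := α) h) :=
  List.isChain_map_of_isChain _ (fun _ _ hpq heq => hpq (Sum.inr_injective heq)) isReduced_toWord

@[simp]
theorem inrWord_eq_nil {h : FreeGroup β} : inrWord (α := α) h = [] ↔ h = 1 := by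
  simp [inrWord]

@[simp]
theorem inrWord_one : inrWord (α := α) (1 : FreeGroup β) = [] := by
  simp [inrWord]

theorem inl_ne_fst_of_mem_inrWord {h : FreeGroup β} {p : (α ⊕ β) × Bool}
    (hp : p ∈ inrWord h) (a : α) : Sum.inl a ≠ p.1 := by
  obtain ⟨q, -, rfl⟩ := List.mem_map.1 hp
  exact Sum.inl_ne_inr

@[simp]
theorem leftLetters_inrWord (h : FreeGroup β) : leftLetters (inrWord (α := α) h) = [] := by
  simp [leftLetters, inrWord, List.filterMap_map, Function.comp_def]

theorem leftLetters_syllableWord (s : List (FreeGroup β × α × Bool)) (u : FreeGroup β) :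
    leftLetters (syllableWord s u) = s.map Prod.snd := by
  induction s with
  | nil => exact leftLetters_inrWord u
  | cons p s ih =>
    rw [syllableWord, leftLetters, List.filterMap_append, ← leftLetters, leftLetters_inrWord,
      List.filterMap_cons, ← leftLetters, ih]
    rfl

theorem mk_syllableWord_cons (h : FreeGroup β) (x : α × Bool)
    (s : List (FreeGroup β × α × Bool)) (u : FreeGroup β) :
    mk (syllableWord ((h, x) :: s) u) =
      map Sum.inr h * mk [(Sum.inl x.1, x.2)] * mk (syllableWord s u) := by
  rw [syllableWord, ← mk_inrWord, mul_mk, mul_mk, List.append_assoc, List.singleton_append]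

theorem isReduced_inrWord_append (h : FreeGroup β) {x : α × Bool}
    {L : List ((α ⊕ β) × Bool)} (hL : IsReduced ((Sum.inl x.1, x.2) :: L)) :
    IsReduced (inrWord h ++ (Sum.inl x.1, x.2) :: L) :=
  (isReduced_inrWord h).append hL fun p hp q hq hpq => by
    rw [List.head?_cons, Option.mem_some_iff] at hq
    subst hq
    exact (inl_ne_fst_of_mem_inrWord (List.mem_of_mem_getLast? hp) x.1 hpq.symm).elim

theorem isReduced_inl_cons_syllableWord (u : FreeGroup β) :
    ∀ {x : α × Bool} {s : List (FreeGroup β × α × Bool)},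
      (∀ y ∈ s.head?, y.1 = 1 → x.1 = y.2.1 → x.2 = y.2.2) → IsSeparated s →
        IsReduced ((Sum.inl x.1, x.2) :: syllableWord s u)
  | x, [], _, _ => (isReduced_inrWord u).cons fun p hp hxp =>
      (inl_ne_fst_of_mem_inrWord (List.mem_of_mem_head? hp) x.1 hxp).elim
  | x, (h, y) :: s, hxy, hs =>
    (isReduced_inrWord_append h (isReduced_inl_cons_syllableWord u hs.rel_head? hs.tail)).cons
      fun p hp hxp => by
        by_cases h1 : h = 1
        · subst h1
          simp only [inrWord_one, List.nil_append, List.head?_cons, Option.mem_some_iff] at hp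
          subst hp
          exact hxy _ rfl rfl (Sum.inl_injective hxp)
        · rw [List.head?_append_of_ne_nil _ (by simpa using h1)] at hp
          exact (inl_ne_fst_of_mem_inrWord (List.mem_of_mem_head? hp) x.1 hxp).elim

theorem isReduced_syllableWord {s : List (FreeGroup β × α × Bool)} (hs : IsSeparated s)
    (u : FreeGroup β) : IsReduced (syllableWord s u) := by
  cases s with
  | nil => exact isReduced_inrWord u
  | cons p _ =>
    exact isReduced_inrWord_append p.1 (isReduced_inl_cons_syllableWord u hs.rel_head? hs.tail)

theorem inrWord_mk_cons {b : β} {e : Bool} {h : FreeGroup β}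
    (hbh : IsReduced ((Sum.inr b, e) :: inrWord h : List ((α ⊕ β) × Bool))) :
    inrWord (α := α) (mk ((b, e) :: toWord h)) = (Sum.inr b, e) :: inrWord h := by
  have : IsReduced ((b, e) :: toWord h) :=
    List.isChain_of_isChain_map (fun p : β × Bool => ((Sum.inr p.1 : α ⊕ β), p.2))
      (fun _ _ hpq heq => hpq (congrArg Sum.inr heq)) hbh
  rw [inrWord, toWord_mk, this.reduce_eq]
  rfl

theorem exists_syllableWord_eq :
    ∀ {l : List ((α ⊕ β) × Bool)}, IsReduced l →
      ∃ s u, IsSeparated s ∧ syllableWord s u = l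
  | [], _ => ⟨[], 1, List.isChain_nil, by simp [syllableWord]⟩
  | (Sum.inl a, e) :: l, hl => by
    obtain ⟨s, u, hs, rfl⟩ := exists_syllableWord_eq hl.tail
    refine ⟨(1, a, e) :: s, u, hs.cons ?_, by simp [syllableWord]⟩
    rintro ⟨h, y⟩ hy rfl
    cases s with
    | nil => simp at hy
    | cons _ _ =>
      simp only [List.head?_cons, Option.mem_some_iff] at hy
      subst hy
      simp only [syllableWord, inrWord_one, List.nil_append, isReduced_cons_cons] at hl
      exact fun hay => hl.1 (congrArg Sum.inl hay)
  | (Sum.inr b, e) :: l, hl => by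
    obtain ⟨s, u, hs, rfl⟩ := exists_syllableWord_eq hl.tail
    cases s with
    | nil => exact ⟨[], mk ((b, e) :: toWord u), hs, inrWord_mk_cons hl⟩
    | cons p s =>
      refine ⟨(mk ((b, e) :: toWord p.1), p.2) :: s, u,
        List.isChain_cons.2 (List.isChain_cons.1 hs), ?_⟩
      rw [syllableWord, syllableWord, inrWord_mk_cons (hl.infix ⟨[], _, rfl⟩), List.cons_append]

end Syllables

section Slide

open FreeGroup

variable {α β : Type*} (v : α → FreeGroup β)

def slidePre : α × Bool → FreeGroup β
  | (a, true) => v a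
  | (_, false) => 1

def slidePost : α × Bool → FreeGroup β
  | (_, true) => 1
  | (a, false) => (v a)⁻¹

def slide : FreeGroup β → List (FreeGroup β × α × Bool) → List (FreeGroup β × α × Bool)
  | _, [] => []
  | c, (h, x) :: s => (c * h * slidePre v x, x) :: slide (slidePost v x) s

def slideCarry : FreeGroup β → List (FreeGroup β × α × Bool) → FreeGroup β
  | c, [] => c
  | _, (_, x) :: s => slideCarry (slidePost v x) s

theorem map_snd_slide (c : FreeGroup β) (s : List (FreeGroup β × α × Bool)) :
    (slide v c s).map Prod.snd = s.map Prod.snd := by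
  induction s generalizing c with
  | nil => rfl
  | cons p s ih => simp [slide, ih]

theorem slidePost_mul_mul_slidePre_eq_one_iff {x y : α × Bool} (hxy : x.1 = y.1)
    (he : x.2 ≠ y.2) (h : FreeGroup β) : slidePost v x * h * slidePre v y = 1 ↔ h = 1 := by
  obtain ⟨a, _ | _⟩ := x <;> obtain ⟨b, _ | _⟩ := y <;> simp_all [slidePre, slidePost]
  simpa using conj_eq_one_iff (a := (v b)⁻¹) (b := h)

theorem IsSeparated.slide {s : List (FreeGroup β × α × Bool)} (hs : IsSeparated s)
    (c : FreeGroup β) : IsSeparated (slide v c s) := by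
  induction s generalizing c with
  | nil => exact List.isChain_nil
  | cons p s ih =>
    refine (ih hs.tail _).cons ?_
    rintro y hy hy1 hxy
    cases s with
    | nil => simp [_root_.slide] at hy
    | cons q s =>
      simp only [_root_.slide, List.head?_cons, Option.mem_some_iff] at hy
      subst hy
      by_contra he
      have hq1 := (slidePost_mul_mul_slidePre_eq_one_iff v hxy he q.1).1 hy1
      exact he (hs.rel_head? (y := q) rfl hq1 hxy)

variable {f : FreeGroup (α ⊕ β) →* FreeGroup (α ⊕ β)}

theorem apply_map_inr_of_apply_inr (hinr : ∀ b, f (of (Sum.inr b)) = of (Sum.inr b))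
    (h : FreeGroup β) : f (map Sum.inr h) = map Sum.inr h :=
  DFunLike.congr_fun (ext_hom (f.comp (map Sum.inr)) _ fun b => by simp [hinr]) h

theorem apply_mk_inl_of_apply_inl
    (hinl : ∀ a, f (of (Sum.inl a)) = map Sum.inr (v a) * of (Sum.inl a)) (x : α × Bool) :
    f (mk [(Sum.inl x.1, x.2)]) =
      map Sum.inr (slidePre v x) * mk [(Sum.inl x.1, x.2)] * map Sum.inr (slidePost v x) := by
  obtain ⟨a, _ | _⟩ := x
  · change f (of (Sum.inl a))⁻¹ = 1 * (of (Sum.inl a))⁻¹ * map Sum.inr (v a)⁻¹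
    rw [_root_.map_inv, hinl, _root_.map_inv, mul_inv_rev, one_mul]
  · change f (of (Sum.inl a)) = map Sum.inr (v a) * of (Sum.inl a) * 1
    rw [hinl, mul_one]

variable [DecidableEq β]

theorem map_inr_mul_apply_mk_syllableWord (hinr : ∀ b, f (of (Sum.inr b)) = of (Sum.inr b))
    (hinl : ∀ a, f (of (Sum.inl a)) = map Sum.inr (v a) * of (Sum.inl a))
    (s : List (FreeGroup β × α × Bool)) (c u : FreeGroup β) :
    map Sum.inr c * f (mk (syllableWord s u)) =
      mk (syllableWord (slide v c s) (slideCarry v c s * u)) := by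
  induction s generalizing c with
  | nil =>
    rw [syllableWord, mk_inrWord, apply_map_inr_of_apply_inr hinr, ← _root_.map_mul]
    exact (mk_inrWord _).symm
  | cons p s ih =>
    obtain ⟨h, x⟩ := p
    rw [slide, slideCarry, mk_syllableWord_cons, mk_syllableWord_cons, ← ih, _root_.map_mul,
      _root_.map_mul, apply_map_inr_of_apply_inr hinr, apply_mk_inl_of_apply_inl v hinl,
      _root_.map_mul, _root_.map_mul]
    group

variable [DecidableEq α]

theorem leftLetters_toWord_apply_of_slide
    (hinr : ∀ b, f (of (Sum.inr b)) = of (Sum.inr b))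
    (hinl : ∀ a, f (of (Sum.inl a)) = map Sum.inr (v a) * of (Sum.inl a))
    (w : FreeGroup (α ⊕ β)) : leftLetters (toWord (f w)) = leftLetters (toWord w) := by
  obtain ⟨s, u, hs, hw⟩ := exists_syllableWord_eq (isReduced_toWord (x := w))
  have hfw : f w = mk (syllableWord (slide v 1 s) (slideCarry v 1 s * u)) := by
    rw [← map_inr_mul_apply_mk_syllableWord v hinr hinl, _root_.map_one, one_mul, hw, mk_toWord]
  rw [hfw, toWord_mk, (isReduced_syllableWord (hs.slide v 1) _).reduce_eq, ← hw,
    leftLetters_syllableWord, leftLetters_syllableWord, map_snd_slide]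

end Slide

open FreeGroup in
theorem vWord_eq_map_inr (n : ℕ) (η : MLetter n × Fin n ≃ Fin (n * (n + 2))) (y : MLetter n)
    (a : Fin n) :
    vWord n η y a = map Sum.inr (of 0 ^ kVal n η y a *
      (of 1 * of 0) ^ (2 * n * (n + 2) - kVal n η y a) * of 1 ^ kVal n η y a) := by
  simp [vWord, bb1, bb2]

theorem map_bpow {α β : Type*} (f : FreeGroup α →* FreeGroup β) (w : FreeGroup α)
    (ε : Bool) : f (bpow w ε) = bpow (f w) ε := by
  cases ε <;> simp [bpow]

theorem statement8_general (n : ℕ) (η : MLetter n × Fin n ≃ Fin (n * (n + 2)))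
    (w : FreeGroup (MLetter n)) (y : MLetter n) (ε : Bool) :
    aProj n (phiM n η y ε w) = aProj n w :=
  leftLetters_toWord_apply_of_slide (f := phiM n η y ε)
    (fun a => bpow (FreeGroup.of 0 ^ kVal n η y a * (FreeGroup.of 1 * FreeGroup.of 0) ^
      (2 * n * (n + 2) - kVal n η y a) * FreeGroup.of 1 ^ kVal n η y a) ε)
    (fun _ => FreeGroup.lift_apply_of)
    (fun a => by
      rw [phiM, FreeGroup.lift_apply_of, phiAux, vWord_eq_map_inr, map_bpow]) w

/-- **Lemma 5.4.** For every `w ∈ F(𝒜₁ ⊔ ℬ)`, `y ∈ 𝒜 ⊔ ℬ` and `ε ∈ {±1}`, the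
`𝒜`-projection of `φ_y^{ε}(w)` coincides letter-for-letter with that of `w`. -/
theorem statement8 (n : ℕ) (hn : 0 < n) (η : MLetter n × Fin n ≃ Fin (n * (n + 2)))
    (w : FreeGroup (MLetter n)) (y : MLetter n) (ε : Bool) :
    aProj n (phiM n η y ε w) = aProj n w :=
  statement8_general n η w y ε
end

section
/- Let w₀ → ⋯ → w_t be a computation with reduced history (i.e., w_i = ρ_{y_i}^{ε_i}(w_{i-1}) with no i such that y_{i+1} = y_i and ε_{i+1} = -ε_i). If |w₀|_𝒜 < |w₁|_𝒜, then |w_{i-1}|_𝒜 ≤ |w_i|_𝒜 for all 1 ≤ i ≤ t. -/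
/-!
Only `𝒜`-steps change `|w|_𝒜`: `φ_y` is an automorphism sending `𝒜₁`-letters to `ℬ`-words times
themselves, so it preserves `|w|_𝒜`, and `ρ_{b_i}^{±1}` then only appends a `ℬ`-letter.

After an increasing `𝒜`-step `p`, write `w_s = h u` until the next `𝒜`-step, where `h` ends with
the `𝒜`-letter written at step `p` and `u ∈ F(ℬ)` is trivial (`s = p + 1`) or ends with the
`ℬ`-letter written at step `s - 1`. A `ℬ`-step keeps this shape: `φ` fixes `u` and moves at most
a factor `v(y,a)^{±1}` from `h` into `u`; every letter of that factor has the sign of the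
`ℬ`-letter appended in the same step, so it cannot eat `u`, and the reduced history prevents the
appended letter from cancelling the last letter of `u`. At the next `𝒜`-step the new letter can
only cancel the end of `h` if the `ℬ`-word between them is trivial, which forces `u = 1`, i.e. two
consecutive mutually inverse `𝒜`-steps.
-/

namespace FreeGroup

variable {α : Type*}

theorem mk_singleton_true (a : α) : mk [(a, true)] = (of a : FreeGroup α) :=
  rfl

theorem mk_singleton_false (a : α) :
    mk [(a, false)] = (of a : FreeGroup α)⁻¹ :=
  rfl

variable [DecidableEq α]

theorem toWord_mul_mk_singleton_of_getLast?_ne {w : FreeGroup α} {x : α × Bool}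
    (h : (toWord w).getLast? ≠ some (x.1, !x.2)) : toWord (w * mk [x]) = toWord w ++ [x] := by
  rw [toWord_mul, toWord_mk, reduce_singleton]
  refine IsReduced.reduce_eq (isReduced_toWord.append IsReduced.singleton ?_)
  intro p hp q hq hpq
  obtain rfl : x = q := by simpa using hq
  by_contra hne
  exact h (hp.trans (congrArg some (Prod.ext hpq (Bool.eq_not_iff.mpr hne))))

theorem toWord_mul_mk_singleton_of_eq_append {w : FreeGroup α} {l : List (α × Bool)}
    {x : α × Bool} (h : toWord w = l ++ [(x.1, !x.2)]) : toWord (w * mk [x]) = l := by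
  have hl : IsReduced l := by
    have := (isReduced_toWord (x := w)); rw [h] at this
    exact this.infix ⟨[], [(x.1, !x.2)], by simp⟩
  have hstep : Red.Step (l ++ (x.1, !x.2) :: (x.1, x.2) :: []) (l ++ []) := Red.Step.not_rev
  rw [toWord_mul, toWord_mk, reduce_singleton, h, List.append_assoc]
  simpa [hl.reduce_eq] using reduce.Step.eq hstep

theorem getLast?_toWord_mul_mk_singleton {w : FreeGroup α} {x : α × Bool}
    (h : (toWord w).getLast? ≠ some (x.1, !x.2)) : (toWord (w * mk [x])).getLast? = some x := by
  simp [toWord_mul_mk_singleton_of_getLast?_ne h]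

theorem toWord_mk_singleton_mul (x : α × Bool) (w : FreeGroup α) :
    toWord (mk [x] * w) = match toWord w with
      | [] => [x]
      | y :: l => if x.1 = y.1 ∧ x.2 = !y.2 then l else x :: y :: l := by
  rw [toWord_mul, toWord_mk, reduce_singleton, List.singleton_append, reduce.cons,
    reduce_toWord]
  rcases toWord w with _ | ⟨y, l⟩ <;> rfl

theorem getLast?_toWord_mul_of_forall_snd_eq {g X : FreeGroup α} {s : Bool} {ℓ : α × Bool}
    (hg : ∀ p ∈ toWord g, p.2 = s) (hX : (toWord X).getLast? = some ℓ) (hℓ : ℓ.2 = s) :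
    (toWord (g * X)).getLast? = some ℓ := by
  suffices ∀ L : List (α × Bool), (∀ p ∈ L, p.2 = s) → (toWord (mk L * X)).getLast? = some ℓ by
    simpa only [mk_toWord] using this (toWord g) hg
  intro L hL
  induction L with
  | nil => simpa [← one_eq_mk] using hX
  | cons x L ih =>
    rw [List.forall_mem_cons] at hL
    rw [← List.singleton_append, ← mul_mk, mul_assoc, toWord_mk_singleton_mul]
    specialize ih hL.2
    rcases hZ : toWord (mk L * X) with _ | ⟨y, l⟩
    · simp [hZ] at ih
    · rw [hZ] at ih
      dsimp only
      split_ifs with hxy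
      · rcases l with _ | ⟨z, l⟩
        · simp only [List.getLast?_singleton, Option.some.injEq] at ih
          subst ih
          simp_all
        · simpa using ih
      · simpa using ih

theorem toWord_mul_of_getLast? {h z : FreeGroup α} {ℓ : α × Bool}
    (hh : (toWord h).getLast? = some ℓ) (hz : ∀ p ∈ toWord z, p.1 ≠ ℓ.1) :
    toWord (h * z) = toWord h ++ toWord z := by
  rw [toWord_mul]
  refine IsReduced.reduce_eq (isReduced_toWord.append isReduced_toWord ?_)
  intro p hp q hq hpq
  rw [hh, Option.mem_some_iff] at hp
  subst hp
  exact absurd hpq.symm (hz q (List.mem_of_mem_head? hq))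

theorem exists_eq_mul_mk_singleton_of_getLast? {h : FreeGroup α} {x : α × Bool}
    (hh : (toWord h).getLast? = some x) :
    ∃ h₀, h = h₀ * mk [x] ∧ toWord h = toWord h₀ ++ [x] := by
  obtain ⟨l, hl⟩ := List.getLast?_eq_some_iff.1 hh
  have hred : IsReduced l := by
    have := isReduced_toWord (x := h); rw [hl] at this
    exact this.infix ⟨[], [x], by simp⟩
  refine ⟨mk l, ?_, by rw [hl, toWord_mk, hred.reduce_eq]⟩
  rw [mul_mk, ← hl, mk_toWord]

theorem forall_mem_toWord_snd_of_mem_closure {g : FreeGroup α}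
    (hg : g ∈ Submonoid.closure (Set.range of)) : ∀ p ∈ toWord g, p.2 = true := by
  induction hg using Submonoid.closure_induction with
  | mem x hx =>
    obtain ⟨a, rfl⟩ := hx
    simp [toWord_of]
  | one => simp
  | mul x y _ _ hx hy =>
    intro p hp
    rcases List.mem_append.1 ((toWord_mul_sublist x y).subset hp) with h | h
    exacts [hx p h, hy p h]

theorem forall_mem_toWord_inv_snd {g : FreeGroup α} {s : Bool}
    (hg : ∀ p ∈ toWord g, p.2 = s) : ∀ p ∈ toWord g⁻¹, p.2 = !s := by
  intro p hp
  rw [toWord_inv] at hp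
  simp only [invRev, List.mem_reverse, List.mem_map] at hp
  obtain ⟨q, hq, rfl⟩ := hp
  simp [hg q hq]

theorem lift_apply_eq_self {f : α → FreeGroup α} {x : FreeGroup α}
    (hf : ∀ p ∈ toWord x, f p.1 = of p.1) : lift f x = x := by
  conv_rhs => rw [← lift_of_apply x]
  rw [← mk_toWord (x := x), lift_mk, lift_mk]
  refine congrArg List.prod (List.map_congr_left fun p hp => ?_)
  rw [hf p (by simpa using hp)]

end FreeGroup

open FreeGroup

def bSubgroup (n : ℕ) : Subgroup (FreeGroup (MLetter n)) where
  carrier := {w | IsBWord n w}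
  one_mem' := by simp [IsBWord]
  mul_mem' {x y} hx hy p hp := by
    rcases List.mem_append.1 ((toWord_mul_sublist x y).subset hp) with h | h
    exacts [hx p h, hy p h]
  inv_mem' {x} hx p hp := by
    rw [toWord_inv] at hp
    simp only [invRev, List.mem_reverse, List.mem_map] at hp
    obtain ⟨q, hq, rfl⟩ := hp
    exact hx q hq

section Machine

variable {n : ℕ} (η : MLetter n × Fin n ≃ Fin (n * (n + 2)))

theorem of_inr_mem_bSubgroup (b : Fin 2) : of (Sum.inr b) ∈ bSubgroup n := by
  simp [bSubgroup, IsBWord, toWord_of]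

theorem mk_singleton_inr_mem_bSubgroup (b : Fin 2) (s : Bool) :
    mk [(Sum.inr b, s)] ∈ bSubgroup n := by
  cases s
  · exact inv_mem (of_inr_mem_bSubgroup b)
  · exact of_inr_mem_bSubgroup b

theorem aCount_eq_zero_of_mem_bSubgroup {z : FreeGroup (MLetter n)} (hz : z ∈ bSubgroup n) :
    aCount n z = 0 := by
  simp only [aCount, List.length_eq_zero_iff, List.filter_eq_nil_iff]
  intro p hp
  simpa using Sum.not_isLeft.2 (hz p hp)

theorem aCount_mul_le (x y : FreeGroup (MLetter n)) :
    aCount n (x * y) ≤ aCount n x + aCount n y := by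
  rw [aCount, aCount, aCount, ← List.length_append, ← List.filter_append]
  exact ((toWord_mul_sublist x y).filter _).length_le

theorem aCount_inv (x : FreeGroup (MLetter n)) : aCount n x⁻¹ = aCount n x := by
  simp only [aCount, toWord_inv, invRev, List.filter_reverse, List.length_reverse,
    List.filter_map, List.length_map]
  rfl

theorem aCount_one : aCount n (1 : FreeGroup (MLetter n)) = 0 := by
  simp [aCount]

theorem aCount_mul_of_mem_bSubgroup (w : FreeGroup (MLetter n)) {z : FreeGroup (MLetter n)}
    (hz : z ∈ bSubgroup n) : aCount n (w * z) = aCount n w := by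
  have h₁ := aCount_mul_le w z
  have h₂ := aCount_mul_le (w * z) z⁻¹
  rw [mul_inv_cancel_right, aCount_inv, aCount_eq_zero_of_mem_bSubgroup hz] at h₂
  rw [aCount_eq_zero_of_mem_bSubgroup hz] at h₁
  omega

theorem aCount_mul_of_mem_bSubgroup_left {z : FreeGroup (MLetter n)} (hz : z ∈ bSubgroup n)
    (w : FreeGroup (MLetter n)) : aCount n (z * w) = aCount n w := by
  rw [← aCount_inv, mul_inv_rev, aCount_mul_of_mem_bSubgroup _ (inv_mem hz), aCount_inv]

theorem aCount_lift_le {f : MLetter n → FreeGroup (MLetter n)}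
    (hf : ∀ c, aCount n (f c) ≤ if c.isLeft then 1 else 0) (w : FreeGroup (MLetter n)) :
    aCount n (lift f w) ≤ aCount n w := by
  suffices ∀ L : List (MLetter n × Bool),
      aCount n (lift f (mk L)) ≤ (L.filter fun p => p.1.isLeft).length by
    have := this (toWord w)
    rwa [mk_toWord] at this
  intro L
  induction L with
  | nil => simp [← one_eq_mk, aCount_one]
  | cons x L ih =>
    rw [← List.singleton_append, ← mul_mk, _root_.map_mul, List.filter_append, List.length_append]
    refine (aCount_mul_le _ _).trans (Nat.add_le_add ?_ ih)
    rcases x with ⟨c, _ | _⟩ <;> cases hc : c.isLeft <;> simpa [lift_mk, aCount_inv, hc] using hf c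

theorem getLast?_toWord_of_aCount_lt {w : FreeGroup (MLetter n)} {x : MLetter n × Bool}
    (h : aCount n w < aCount n (w * mk [x])) : (toWord (w * mk [x])).getLast? = some x := by
  by_cases hw : (toWord w).getLast? = some (x.1, !x.2)
  · obtain ⟨l, hl⟩ := List.getLast?_eq_some_iff.1 hw
    have hlen : aCount n (w * mk [x]) ≤ aCount n w := by
      simp only [aCount, toWord_mul_mk_singleton_of_eq_append hl, hl, List.filter_append,
        List.length_append]
      omega
    omega
  · exact getLast?_toWord_mul_mk_singleton hw

theorem aCount_mul_mk_singleton_inl {w : FreeGroup (MLetter n)} {a : Fin n} {s : Bool}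
    (hw : (toWord w).getLast? ≠ some (Sum.inl a, !s)) :
    aCount n (w * mk [(Sum.inl a, s)]) = aCount n w + 1 := by
  simp [aCount, toWord_mul_mk_singleton_of_getLast?_ne (x := (Sum.inl a, s)) hw, List.filter]

theorem aCount_mul_mul_mk_singleton {h z : FreeGroup (MLetter n)} {a a' : Fin n} {σ s : Bool}
    (hh : (toWord h).getLast? = some (Sum.inl a, σ)) (hz : z ∈ bSubgroup n)
    (hcancel : ¬(z = 1 ∧ a' = a ∧ s = !σ)) :
    aCount n (h * z * mk [(Sum.inl a', s)]) = aCount n (h * z) + 1 := by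
  refine aCount_mul_mk_singleton_inl fun hlast => hcancel ?_
  have hzB : ∀ p ∈ toWord z, p.1.isRight := hz
  rw [toWord_mul_of_getLast? hh fun p hp hp' => by simpa [hp'] using hzB p hp] at hlast
  rcases List.eq_nil_or_concat (toWord z) with hnil | ⟨l, p, hl⟩
  · rw [hnil, List.append_nil, hh] at hlast
    simp only [Option.some.injEq, Prod.mk.injEq, Sum.inl.injEq] at hlast
    exact ⟨toWord_eq_nil_iff.1 hnil, hlast.1.symm, by simp [hlast.2]⟩
  · rw [hl, List.concat_eq_append, ← List.append_assoc, List.getLast?_concat] at hlast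
    have := hzB p (by simp [hl])
    simp [Option.some_inj.1 hlast] at this

theorem vWord_mem_bSubgroup (y : MLetter n) (a : Fin n) : vWord n η y a ∈ bSubgroup n := by
  have h₁ := of_inr_mem_bSubgroup (n := n) 0
  have h₂ := of_inr_mem_bSubgroup (n := n) 1
  exact mul_mem (mul_mem (pow_mem h₁ _) (pow_mem (mul_mem h₂ h₁) _)) (pow_mem h₂ _)

theorem bpow_vWord_mem_bSubgroup (y : MLetter n) (a : Fin n) (ε : Bool) :
    bpow (vWord n η y a) ε ∈ bSubgroup n := by
  cases ε
  exacts [inv_mem (vWord_mem_bSubgroup η y a), vWord_mem_bSubgroup η y a]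

theorem ite_bpow_vWord_mem_bSubgroup (σ : Bool) (y : MLetter n) (a : Fin n) (ε : Bool) :
    (if σ then 1 else bpow (vWord n η y a) ε) ∈ bSubgroup n := by
  split
  exacts [one_mem _, bpow_vWord_mem_bSubgroup η y a ε]

theorem forall_mem_toWord_bpow_vWord (y : MLetter n) (a : Fin n) (ε : Bool) :
    ∀ p ∈ toWord (bpow (vWord n η y a) ε), p.2 = ε := by
  have hpos : ∀ p ∈ toWord (vWord n η y a), p.2 = true := by
    refine forall_mem_toWord_snd_of_mem_closure ?_
    have h₁ : bb1 n ∈ Submonoid.closure (Set.range of) := Submonoid.subset_closure ⟨_, rfl⟩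
    have h₂ : bb2 n ∈ Submonoid.closure (Set.range of) := Submonoid.subset_closure ⟨_, rfl⟩
    exact mul_mem (mul_mem (pow_mem h₁ _) (pow_mem (mul_mem h₂ h₁) _)) (pow_mem h₂ _)
  cases ε
  · exact forall_mem_toWord_inv_snd hpos
  · exact hpos

@[simp]
theorem phiM_of_inl (y : MLetter n) (ε : Bool) (a : Fin n) :
    phiM n η y ε (of (Sum.inl a)) = bpow (vWord n η y a) ε * of (Sum.inl a) :=
  lift_apply_of

@[simp]
theorem phiM_of_inr (y : MLetter n) (ε : Bool) (b : Fin 2) :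
    phiM n η y ε (of (Sum.inr b)) = of (Sum.inr b) :=
  lift_apply_of

theorem phiM_apply_of_mem_bSubgroup (y : MLetter n) (ε : Bool) {z : FreeGroup (MLetter n)}
    (hz : z ∈ bSubgroup n) : phiM n η y ε z = z := by
  refine lift_apply_eq_self fun p hp => ?_
  obtain ⟨b, hb⟩ := Sum.isRight_iff.1 (hz p hp)
  simp [phiAux, hb]

theorem phiM_not_phiM (y : MLetter n) (ε : Bool) (w : FreeGroup (MLetter n)) :
    phiM n η y (!ε) (phiM n η y ε w) = w := by
  suffices (phiM n η y (!ε)).comp (phiM n η y ε) = MonoidHom.id _ from DFunLike.congr_fun this w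
  refine ext_hom _ _ fun c => ?_
  rcases c with a | b
  · cases ε <;> simp [bpow, phiM_apply_of_mem_bSubgroup η y _ (vWord_mem_bSubgroup η y a)]
  · simp

theorem aCount_phiM (y : MLetter n) (ε : Bool) (w : FreeGroup (MLetter n)) :
    aCount n (phiM n η y ε w) = aCount n w := by
  have hle : ∀ ε w, aCount n (phiM n η y ε w) ≤ aCount n w := fun ε =>
    aCount_lift_le fun c => by
      rcases c with a | b
      · simp only [phiAux, Sum.isLeft_inl, if_true,
          aCount_mul_of_mem_bSubgroup_left (bpow_vWord_mem_bSubgroup η y a ε)]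
        simp [aCount, toWord_of, List.filter]
      · simp [phiAux, aCount, toWord_of]
  refine (hle ε w).antisymm ?_
  simpa only [phiM_not_phiM] using hle (!ε) (phiM n η y ε w)

theorem rhoM_inr (b : Fin 2) (ε : Bool) (w : FreeGroup (MLetter n)) :
    rhoM n η (Sum.inr b) ε w = phiM n η (Sum.inr b) ε w * mk [(Sum.inr b, !ε)] := by
  cases ε <;> rfl

theorem rhoM_inl (a : Fin n) (ε : Bool) (w : FreeGroup (MLetter n)) :
    rhoM n η (Sum.inl a) ε w = phiM n η (Sum.inl a) ε w *
      (if ε then 1 else (vWord n η (Sum.inl a) a)⁻¹) * mk [(Sum.inl a, !ε)] := by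
  cases ε
  · rfl
  · simp [rhoM, mk_singleton_false]

theorem rhoM_inl_correction_mem (a : Fin n) (ε : Bool) :
    (if ε then 1 else (vWord n η (Sum.inl a) a)⁻¹) ∈ bSubgroup n := by
  cases ε
  · exact inv_mem (vWord_mem_bSubgroup η _ a)
  · exact one_mem _

theorem aCount_rhoM_inr (b : Fin 2) (ε : Bool) (w : FreeGroup (MLetter n)) :
    aCount n (rhoM n η (Sum.inr b) ε w) = aCount n w := by
  rw [rhoM_inr, aCount_mul_of_mem_bSubgroup _ (mk_singleton_inr_mem_bSubgroup b _), aCount_phiM]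

theorem exists_phiM_eq_mul_of_getLast? {h : FreeGroup (MLetter n)} {a : Fin n} {σ : Bool}
    (hh : (toWord h).getLast? = some (Sum.inl a, σ)) (y : MLetter n) (ε : Bool) :
    ∃ h', phiM n η y ε h = h' * (if σ then 1 else bpow (vWord n η y a) (!ε)) ∧
      (toWord h').getLast? = some (Sum.inl a, σ) := by
  obtain ⟨h₀, rfl, htw⟩ := exists_eq_mul_mk_singleton_of_getLast? hh
  have hlt : aCount n h₀ < aCount n (h₀ * mk [(Sum.inl a, σ)]) := by
    simp [aCount, htw]
  have hv := bpow_vWord_mem_bSubgroup η y a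
  rw [← aCount_phiM η y ε, ← aCount_phiM η y ε (h₀ * _)] at hlt
  cases σ
  · have hφ : phiM n η y ε (h₀ * mk [(Sum.inl a, false)]) =
        phiM n η y ε h₀ * mk [(Sum.inl a, false)] * bpow (vWord n η y a) (!ε) := by
      cases ε <;> simp [mk_singleton_false, bpow, mul_assoc]
    refine ⟨_, by simpa using hφ, getLast?_toWord_of_aCount_lt ?_⟩
    rwa [hφ, aCount_mul_of_mem_bSubgroup _ (hv _)] at hlt
  · have hφ : phiM n η y ε (h₀ * mk [(Sum.inl a, true)]) =
        phiM n η y ε h₀ * bpow (vWord n η y a) ε * mk [(Sum.inl a, true)] := by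
      simp [mk_singleton_true, mul_assoc]
    refine ⟨_, (mul_one _).symm, ?_⟩
    rw [hφ] at hlt ⊢
    rw [← aCount_mul_of_mem_bSubgroup _ (hv ε)] at hlt
    exact getLast?_toWord_of_aCount_lt hlt

end Machine

section Computation

variable {n : ℕ} {η : MLetter n × Fin n ≃ Fin (n * (n + 2))} {t : ℕ} {y : ℕ → MLetter n}
  {e : ℕ → Bool} {w : ℕ → FreeGroup (MLetter n)}

def BTailAfter (y : ℕ → MLetter n) (e : ℕ → Bool) (w : ℕ → FreeGroup (MLetter n)) (a : Fin n)
    (p s : ℕ) : Prop :=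
  p < s ∧ y p = Sum.inl a ∧ ∃ h u, w s = h * u ∧ (toWord h).getLast? = some (Sum.inl a, !e p) ∧
    u ∈ bSubgroup n ∧ (s = p + 1 ∧ u = 1 ∨ (toWord u).getLast? = some (y (s - 1), !e (s - 1)))

theorem bTailAfter_succ_of_aCount_lt (hcomp : IsComputation n η t y e w) {p : ℕ} {a : Fin n}
    (hp : p < t) (hy : y p = Sum.inl a) (hlt : aCount n (w p) < aCount n (w (p + 1))) :
    BTailAfter y e w a p (p + 1) := by
  refine ⟨p.lt_succ_self, hy, w (p + 1), 1, (mul_one _).symm, ?_, one_mem _, .inl ⟨rfl, rfl⟩⟩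
  rw [hcomp p hp, hy, rhoM_inl] at hlt ⊢
  refine getLast?_toWord_of_aCount_lt ?_
  rwa [aCount_mul_of_mem_bSubgroup _ (rhoM_inl_correction_mem η a _), aCount_phiM]

theorem BTailAfter.succ_of_inr (hcomp : IsComputation n η t y e w)
    (hred : ReducedHistory n t y e) {a : Fin n} {p s : ℕ} {b : Fin 2} (hs : s < t)
    (hb : y s = Sum.inr b) (hT : BTailAfter y e w a p s) : BTailAfter y e w a p (s + 1) := by
  obtain ⟨hps, hy, h, u, hw, hh, hu, htail⟩ := hT
  obtain ⟨h', hφ, hh'⟩ := exists_phiM_eq_mul_of_getLast? η hh (Sum.inr b) (e s)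
  generalize hr : (if !e p then 1 else bpow (vWord n η (Sum.inr b) a) (!e s)) = r at hφ
  have hu' : (toWord (u * mk [(Sum.inr b, !e s)])).getLast? = some (Sum.inr b, !e s) := by
    refine getLast?_toWord_mul_mk_singleton ?_
    rcases htail with ⟨-, rfl⟩ | hlast
    · simp
    · rw [hlast]
      intro heq
      refine hred (s - 1) (by omega) ⟨?_, ?_⟩ <;> rw [Nat.sub_add_cancel (by omega)]
      · simp_all
      · simpa using (congrArg Prod.snd (Option.some_inj.1 heq)).symm
  refine ⟨by omega, hy, h', r * (u * mk [(Sum.inr b, !e s)]), ?_, hh', ?_, .inr ?_⟩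
  · rw [hcomp s hs, hb, rhoM_inr, hw, _root_.map_mul, hφ, phiM_apply_of_mem_bSubgroup η _ _ hu]
    group
  · exact mul_mem (hr ▸ ite_bpow_vWord_mem_bSubgroup η _ _ a _)
      (mul_mem hu (mk_singleton_inr_mem_bSubgroup b _))
  · rw [Nat.add_sub_cancel, hb, ← hr]
    cases e p
    · simpa using hu'
    · exact getLast?_toWord_mul_of_forall_snd_eq (forall_mem_toWord_bpow_vWord η _ a _) hu' rfl

theorem BTailAfter.aCount_lt_of_inl (hcomp : IsComputation n η t y e w)
    (hred : ReducedHistory n t y e) {a a' : Fin n} {p q : ℕ} (hq : q < t)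
    (ha' : y q = Sum.inl a') (hT : BTailAfter y e w a p q) :
    aCount n (w q) < aCount n (w (q + 1)) := by
  obtain ⟨hpq, hy, h, u, hw, hh, hu, htail⟩ := hT
  obtain ⟨h', hφ, hh'⟩ := exists_phiM_eq_mul_of_getLast? η hh (Sum.inl a') (e q)
  generalize hr : (if !e p then 1 else bpow (vWord n η (Sum.inl a') a) (!e q)) = r at hφ
  have hwq : w (q + 1) = h' * (r * u * (if e q then 1 else (vWord n η (Sum.inl a') a')⁻¹)) *
      mk [(Sum.inl a', !e q)] := by
    rw [hcomp q hq, ha', rhoM_inl, hw, _root_.map_mul, hφ,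
      phiM_apply_of_mem_bSubgroup η _ _ hu]
    simp only [mul_assoc]
  generalize hc : (if e q then 1 else (vWord n η (Sum.inl a') a')⁻¹) = c at hwq
  have hrB : r ∈ bSubgroup n := hr ▸ ite_bpow_vWord_mem_bSubgroup η _ _ a _
  have hzB : r * u * c ∈ bSubgroup n :=
    mul_mem (mul_mem hrB hu) (hc ▸ rhoM_inl_correction_mem η a' _)
  have hcount : aCount n (h' * (r * u * c)) = aCount n (w q) := by
    rw [aCount_mul_of_mem_bSubgroup _ hzB, hw, aCount_mul_of_mem_bSubgroup _ hu,
      ← aCount_phiM η (Sum.inl a') (e q) h, hφ,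
      aCount_mul_of_mem_bSubgroup _ hrB]
  rw [hwq, aCount_mul_mul_mk_singleton hh' hzB ?_, hcount]
  · exact Nat.lt_succ_self _
  -- a cancellation forces `c = r⁻¹`, hence `u = 1`: steps `p` and `q = p + 1` are mutually inverse
  rintro ⟨hz, rfl, hs⟩
  have heq : e q = !e p := by simpa using hs
  have hu1 : u = 1 := by
    rw [heq] at hr hc
    cases hep : e p <;>
      simp only [hep, Bool.not_true, Bool.not_false, ↓reduceIte, bpow] at hr hc <;>
      subst hr hc <;> simpa using hz
  rcases htail with ⟨rfl, -⟩ | hlast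
  · exact hred p hq ⟨by rw [ha', hy], by simpa using hs⟩
  · simp [hu1] at hlast

theorem BTailAfter.step (hcomp : IsComputation n η t y e w) (hred : ReducedHistory n t y e)
    {a : Fin n} {p s : ℕ} (hs : s < t) (hT : BTailAfter y e w a p s) :
    aCount n (w s) ≤ aCount n (w (s + 1)) ∧ ∃ a' p', BTailAfter y e w a' p' (s + 1) := by
  rcases hys : y s with a' | b
  · have hlt := hT.aCount_lt_of_inl hcomp hred hs hys
    exact ⟨hlt.le, a', s, bTailAfter_succ_of_aCount_lt hcomp hs hys hlt⟩
  · refine ⟨?_, a, p, hT.succ_of_inr hcomp hred hs hys⟩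
    rw [hcomp s hs, hys, aCount_rhoM_inr]

end Computation

theorem statement9_general (n : ℕ) (η : MLetter n × Fin n ≃ Fin (n * (n + 2)))
    (t : ℕ) (y : ℕ → MLetter n) (e : ℕ → Bool)
    (w : ℕ → FreeGroup (MLetter n))
    (hcomp : IsComputation n η t y e w) (hred : ReducedHistory n t y e)
    (h01 : aCount n (w 0) < aCount n (w 1)) :
    ∀ i, 1 ≤ i → i ≤ t → aCount n (w (i - 1)) ≤ aCount n (w i) := by
  have hinv : ∀ s, 1 ≤ s → s ≤ t → ∃ a p, BTailAfter y e w a p s := by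
    intro s hs
    induction s, hs using Nat.le_induction with
    | base =>
      intro ht
      rcases hy0 : y 0 with a | b
      · exact ⟨a, 0, bTailAfter_succ_of_aCount_lt hcomp ht hy0 h01⟩
      · rw [hcomp 0 ht, hy0, aCount_rhoM_inr] at h01
        exact absurd h01 (lt_irrefl _)
    | succ s hs ih =>
      intro hst
      obtain ⟨a, p, hT⟩ := ih (by omega)
      exact (hT.step hcomp hred (by omega)).2
  intro i hi hit
  obtain ⟨j, rfl⟩ := Nat.exists_eq_add_of_le' hi
  rcases Nat.eq_zero_or_pos j with rfl | hj
  · exact h01.le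
  · obtain ⟨a, p, hT⟩ := hinv j hj (by omega)
    simpa using (hT.step hcomp hred (by omega)).1

/-- **Lemma 5.7 (`𝒜`-growth).** Let `w₀ → ⋯ → w_t` be a computation with reduced
history.  If `|w₀|_𝒜 < |w₁|_𝒜`, then `|w_{i-1}|_𝒜 ≤ |w_i|_𝒜` for all `1 ≤ i ≤ t`. -/
theorem statement9 (n : ℕ) (hn : 0 < n) (η : MLetter n × Fin n ≃ Fin (n * (n + 2)))
    (t : ℕ) (ht : 1 ≤ t) (y : ℕ → MLetter n) (e : ℕ → Bool)
    (w : ℕ → FreeGroup (MLetter n))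
    (hcomp : IsComputation n η t y e w) (hred : ReducedHistory n t y e)
    (h01 : aCount n (w 0) < aCount n (w 1)) :
    ∀ i, 1 ≤ i → i ≤ t → aCount n (w (i - 1)) ≤ aCount n (w i) :=
  statement9_general n η t y e w hcomp hred h01
end

section
/- For every word w over Y_C ∪ Y_C^{-1} that represents the identity of R_C, there exist m₀ ∈ ℕ with C·m₀ ≤ ‖w‖ (where ‖w‖ is the length of w), relators r₁, …, r_{m₀} ∈ S_C with ‖r_i‖ ≤ 2‖w‖, signs ε₁, …, ε_{m₀} ∈ {±1}, and elements g₁, …, g_{m₀} of the free group F(Y_C), such that w = g₁ r₁^{ε₁} g₁^{-1} ⋯ g_{m₀} r_{m₀}^{ε_{m₀}} g_{m₀}^{-1} holds in F(Y_C). (This is the algebraic form, via van Kampen's lemma, of the statement that w bounds a van Kampen diagram over ⟨Y_C | S_C⟩ with at most ‖w‖/C cells, each of perimeter at most 2‖w‖.) -/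
/-- Evaluate a word over `(Y ∪ Y⁻¹)` (with `Y = X ⊔ X̄`) in the group `R`: the letter
`x` maps to `f x`, the letter `x̄` maps to `(f x)⁻¹` (this is evaluation of the
`ξ`-image of the word). -/
def evalWord {X : Type*} {R : Type*} [Group R] (f : X → R)
    (w : List ((X ⊕ X) × Bool)) : R :=
  (w.map fun p =>
    if p.2 then Sum.elim f (fun x => (f x)⁻¹) p.1
    else (Sum.elim f (fun x => (f x)⁻¹) p.1)⁻¹).prod

/-- The generator block `A_a = a_{1,a} ⋯ a_{C,a} ∈ F(Y_C)` for a letter `a ∈ Y = X ⊔ X̄`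
(here `Y_C` is encoded as `Fin C × (X ⊕ X)`). -/
def blockA' {X : Type*} (C : ℕ) (a : X ⊕ X) : FreeGroup (Fin C × (X ⊕ X)) :=
  (List.ofFn fun j : Fin C => FreeGroup.of (j, a)).prod

/-- The relator `r_C = r(A_1, …, A_m) ∈ S_C` obtained from a positive word `s ∈ S`. -/
def relC {X : Type*} (C : ℕ) (s : List (X ⊕ X)) : FreeGroup (Fin C × (X ⊕ X)) :=
  (s.map (blockA' C)).prod

/-!
Pick a row `j` of `Y_C = Fin C × Y` holding the fewest letters of `w`, say `n` of them, so that
`C * n ≤ ‖w‖`. Write `A_y = U · a_{j,y} · Q` with `U, Q` in the other rows. The substitution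
`a_{j,y} ↦ U⁻¹ y Q⁻¹`, identity on the other rows, maps `F(Y_C)` to `R ∗ F(Y_C)` and sends each
block `A_y` to `y`, so it kills `S_C`. Splitting every row-`j` letter of `w` in the same way makes
`w` a product of syllables: elements of the other rows and block words `A_v`, the words `v` having
total length `n`. As the image of `w` in the free product is trivial, its syllables cannot form a
reduced word: some block word has `v = 1` in `R` (split it off as a conjugated cell), or some
other-row syllable is trivial, or two neighbouring syllables merge. Repeating this writes `w` as a
product of conjugated cells of total length at most `n`. A cell `A_v` with `v = 1` in `R` is a
product of at most `‖v‖` conjugates of relators of length at most `2‖v‖`: each negative letter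
`A_y⁻¹ = (A_ȳ A_y)⁻¹ A_ȳ` contributes the relator `ȳ y`, and what remains is the positive relator
obtained from `v` by replacing each `y⁻¹` with `ȳ`.
-/

namespace FreeGroup

lemma mk_singleton {α : Type*} (p : α × Bool) : mk [p] = bpow (of p.1) p.2 := by
  obtain ⟨a, _ | _⟩ := p
  · simp [bpow, of, inv_mk, invRev]
  · rfl

lemma invRev_map_fst_reverse {α : Type*} {v : List (α × Bool)} (hv : ∀ p ∈ v, p.2 = false) :
    invRev ((v.map Prod.fst).reverse.map fun a => (a, true)) = v := by
  simp only [invRev, List.map_reverse, List.reverse_reverse, List.map_map]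
  exact (List.map_congr_left fun p hp => by simp [← hv p hp]).trans (List.map_id v)

end FreeGroup

universe u in
instance instGroupCond {G H : Type u} [Group G] [Group H] : ∀ b, Group (cond b G H)
  | true => ‹Group G›
  | false => ‹Group H›

namespace Monoid.CoprodI.Word

variable {ι : Type*} {M : ι → Type*} [∀ i, Monoid (M i)] [DecidableEq ι] [∀ i, DecidableEq (M i)]

theorem prod_eq_one_iff (w : Word M) : w.prod = 1 ↔ w = empty :=
  ⟨fun h => equiv.symm.injective (h.trans prod_empty.symm), fun h => h ▸ prod_empty⟩

end Monoid.CoprodI.Word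

/-! A list of syllables `K ⊕ List α` encodes the product of the `φ k` and `(v.map a).prod` in `G`;
`β` maps it to the product of the letters `syllableLetter` of the free product of `M`. -/
namespace CellDecomposition

open Monoid CoprodI

variable {M : Bool → Type*} [∀ b, Group (M b)] {G K α : Type*} [Group G] [Group K]
  (φ : K →* G) (ψ : K →* M false) (a : α → G) (r : α → M true)

def syllableVal : K ⊕ List α → G := Sum.elim φ fun v => (v.map a).prod

def syllableLetter : K ⊕ List α → Σ b, M b :=
  Sum.elim (fun k => ⟨false, ψ k⟩) fun v => ⟨true, (v.map r).prod⟩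

def syllableLength : K ⊕ List α → ℕ := Sum.elim (fun _ => 0) List.length

def cellProd (cells : List (List α × G)) : G :=
  (cells.map fun c => c.2 * (c.1.map a).prod * c.2⁻¹).prod

variable {φ ψ a r} {β : G →* CoprodI M}

@[simp] lemma cellProd_nil : cellProd a [] = 1 := rfl

lemma cellProd_append (c₁ c₂ : List (List α × G)) :
    cellProd a (c₁ ++ c₂) = cellProd a c₁ * cellProd a c₂ := by
  simp [cellProd]

lemma map_prod_map_eq_of (ha : ∀ x, β (a x) = of (r x)) (v : List α) :
    β (v.map a).prod = of (v.map r).prod := by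
  simp [map_list_prod, List.map_map, Function.comp_def, ha]

lemma map_syllableVal (hφ : ∀ k, β (φ k) = of (ψ k)) (ha : ∀ x, β (a x) = of (r x))
    (p : K ⊕ List α) : β (syllableVal φ a p) = of (syllableLetter ψ r p).2 := by
  rcases p with k | v
  · exact hφ k
  · exact map_prod_map_eq_of ha v

lemma map_cellProd_eq_one (ha : ∀ x, β (a x) = of (r x)) (cells : List (List α × G))
    (hcells : ∀ c ∈ cells, (c.1.map r).prod = 1) : β (cellProd a cells) = 1 := by
  rw [cellProd, map_list_prod, List.map_map]
  refine List.prod_eq_one fun x hx => ?_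
  obtain ⟨c, hc, rfl⟩ := List.mem_map.1 hx
  simp [map_prod_map_eq_of ha, hcells c hc]

lemma prod_syllableVal_middle (L₁ L₂ : List (K ⊕ List α)) (p : K ⊕ List α) :
    ((L₁ ++ p :: L₂).map (syllableVal φ a)).prod =
      (L₁.map (syllableVal φ a)).prod * syllableVal φ a p * (L₂.map (syllableVal φ a)).prod := by
  simp [mul_assoc]

lemma exists_erase_of_letter_eq_one (hψ : Function.Injective ψ) (L₁ L₂ : List (K ⊕ List α))
    (p : K ⊕ List α) (hp : (syllableLetter ψ r p).2 = 1) :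
    ∃ cells : List (List α × G),
      ((L₁ ++ p :: L₂).map (syllableVal φ a)).prod =
        cellProd a cells * ((L₁ ++ L₂).map (syllableVal φ a)).prod ∧
      (∀ c ∈ cells, (c.1.map r).prod = 1) ∧
      (cells.map fun c => c.1.length).sum + ((L₁ ++ L₂).map syllableLength).sum =
        ((L₁ ++ p :: L₂).map syllableLength).sum := by
  rw [prod_syllableVal_middle]
  rcases p with k | v
  · obtain rfl : k = 1 := hψ (hp.trans ψ.map_one.symm)
    refine ⟨[], ?_, by simp, ?_⟩ <;> simp [syllableVal, syllableLength]
  · set P := (L₁.map (syllableVal φ a)).prod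
    refine ⟨[(v, P)], ?_, fun c hc => (List.mem_singleton.1 hc).symm ▸ hp, ?_⟩
    · simp only [cellProd, syllableVal, List.map_cons, List.map_nil, List.prod_cons,
        List.prod_nil, mul_one, List.map_append, List.prod_append, Sum.elim_inr, P]
      group
    · simp [syllableLength]
      ring

lemma exists_merge_of_fst_eq (L₁ L₂ : List (K ⊕ List α)) (p q : K ⊕ List α)
    (hpq : (syllableLetter ψ r p).1 = (syllableLetter ψ r q).1) :
    ∃ s : K ⊕ List α,
      ((L₁ ++ p :: q :: L₂).map (syllableVal φ a)).prod =
        ((L₁ ++ s :: L₂).map (syllableVal φ a)).prod ∧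
      ((L₁ ++ s :: L₂).map syllableLength).sum =
        ((L₁ ++ p :: q :: L₂).map syllableLength).sum := by
  rcases p with k | v <;> rcases q with k' | v'
  · exact ⟨.inl (k * k'), by simp [syllableVal, mul_assoc], by simp [syllableLength]⟩
  · simp [syllableLetter] at hpq
  · simp [syllableLetter] at hpq
  · exact ⟨.inr (v ++ v'), by simp [syllableVal, mul_assoc], by simp [syllableLength]; ring⟩

lemma exists_shorter (hψ : Function.Injective ψ) (hφ : ∀ k, β (φ k) = of (ψ k))
    (ha : ∀ x, β (a x) = of (r x)) (L : List (K ⊕ List α)) (hL : L ≠ [])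
    (hβ : β (L.map (syllableVal φ a)).prod = 1) :
    ∃ (L' : List (K ⊕ List α)) (cells : List (List α × G)), L'.length < L.length ∧
      (L.map (syllableVal φ a)).prod = cellProd a cells * (L'.map (syllableVal φ a)).prod ∧
      (∀ c ∈ cells, (c.1.map r).prod = 1) ∧
      (cells.map fun c => c.1.length).sum + (L'.map syllableLength).sum ≤
        (L.map syllableLength).sum := by
  classical
  by_cases hone : ∃ p ∈ L, (syllableLetter ψ r p).2 = 1
  · obtain ⟨p, hp, hp1⟩ := hone
    obtain ⟨L₁, L₂, rfl⟩ := List.append_of_mem hp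
    obtain ⟨cells, hval, hcells, hlen⟩ :=
      exists_erase_of_letter_eq_one (φ := φ) (a := a) hψ L₁ L₂ p hp1
    exact ⟨L₁ ++ L₂, cells, by simp, hval, hcells, hlen.le⟩
  by_cases hchain : L.IsChain fun p q => (syllableLetter ψ r p).1 ≠ (syllableLetter ψ r q).1
  · -- the syllables form a nonempty reduced word of the free product, which maps to `1`
    push Not at hone
    let w : Word M := ⟨L.map (syllableLetter ψ r),
      fun l hl => by obtain ⟨p, hp, rfl⟩ := List.mem_map.1 hl; exact hone p hp,
      (List.isChain_map _).2 hchain⟩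
    have hw : w.prod = 1 := by
      rw [← hβ, map_list_prod, List.map_map]
      simp [Word.prod, w, Function.comp_def, map_syllableVal hφ ha]
    have := congrArg Word.toList ((Word.prod_eq_one_iff w).1 hw)
    simp [w, hL] at this
  · rw [List.isChain_iff_forall_rel_of_append_cons_cons] at hchain
    push Not at hchain
    obtain ⟨p, q, L₁, L₂, rfl, hpq⟩ := hchain
    obtain ⟨s, hval, hlen⟩ := exists_merge_of_fst_eq (φ := φ) (a := a) L₁ L₂ p q hpq
    exact ⟨L₁ ++ s :: L₂, [], by simp, by simpa using hval, by simp, by simpa using hlen.le⟩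

theorem exists_cells_of_map_eq_one (hψ : Function.Injective ψ) (hφ : ∀ k, β (φ k) = of (ψ k))
    (ha : ∀ x, β (a x) = of (r x)) (L : List (K ⊕ List α))
    (hβ : β (L.map (syllableVal φ a)).prod = 1) :
    ∃ cells : List (List α × G),
      (L.map (syllableVal φ a)).prod = cellProd a cells ∧
      (∀ c ∈ cells, (c.1.map r).prod = 1) ∧
      (cells.map fun c => c.1.length).sum ≤ (L.map syllableLength).sum := by
  rcases eq_or_ne L [] with rfl | hL
  · exact ⟨[], rfl, by simp, by simp⟩
  obtain ⟨L', cells, hlt, hval, hcells, hlen⟩ := exists_shorter hψ hφ ha L hL hβ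
  have hβ' : β (L'.map (syllableVal φ a)).prod = 1 := by
    rwa [hval, map_mul, map_cellProd_eq_one ha cells hcells, one_mul] at hβ
  obtain ⟨cells', hval', hcells', hlen'⟩ := exists_cells_of_map_eq_one hψ hφ ha L' hβ'
  refine ⟨cells ++ cells', by rw [hval, hval', cellProd_append], ?_, ?_⟩
  · simpa [or_imp, forall_and] using And.intro hcells hcells'
  · simp only [List.map_append, List.sum_append]
    omega
termination_by L.length

end CellDecomposition

namespace BlockPresentation

open Monoid CoprodI CellDecomposition

variable {X R : Type} [Group R] (f : X → R) (C : ℕ)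

def genVal : X ⊕ X → R := Sum.elim f fun x => (f x)⁻¹

def letterVal (p : (X ⊕ X) × Bool) : R := if p.2 then genVal f p.1 else (genVal f p.1)⁻¹

def blockLetter (p : (X ⊕ X) × Bool) : FreeGroup (Fin C × (X ⊕ X)) := bpow (blockA' C p.1) p.2

lemma genVal_swap (y : X ⊕ X) : genVal f y.swap = (genVal f y)⁻¹ := by
  cases y <;> simp [genVal]

lemma evalWord_eq_prod_map_letterVal (v : List ((X ⊕ X) × Bool)) :
    evalWord f v = (v.map (letterVal f)).prod := rfl

lemma evalWord_eq_lift (v : List ((X ⊕ X) × Bool)) :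
    evalWord f v = FreeGroup.lift (genVal f) (FreeGroup.mk v) := by
  rw [FreeGroup.lift_mk, evalWord_eq_prod_map_letterVal]
  exact congrArg List.prod (List.map_congr_left fun ⟨_, δ⟩ _ => by cases δ <;> rfl)

lemma prod_map_blockLetter_eq_lift (v : List ((X ⊕ X) × Bool)) :
    (v.map (blockLetter C)).prod = FreeGroup.lift (blockA' C) (FreeGroup.mk v) := by
  rw [FreeGroup.lift_mk]
  exact congrArg List.prod (List.map_congr_left fun ⟨_, δ⟩ _ => by cases δ <;> rfl)

lemma relC_eq_prod_map_blockLetter (s : List (X ⊕ X)) :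
    relC C s = ((s.map fun a => (a, true)).map (blockLetter C)).prod := by
  simp [relC, blockLetter, bpow, Function.comp_def]

def blockPrefix (j : Fin C) (y : X ⊕ X) : FreeGroup (Fin C × (X ⊕ X)) :=
  ((List.ofFn fun k : Fin C => FreeGroup.of (k, y)).take j).prod

def blockSuffix (j : Fin C) (y : X ⊕ X) : FreeGroup (Fin C × (X ⊕ X)) :=
  ((List.ofFn fun k : Fin C => FreeGroup.of (k, y)).drop (j + 1)).prod

def rowComplement (j : Fin C) : Subgroup (FreeGroup (Fin C × (X ⊕ X))) :=
  Subgroup.closure (FreeGroup.of '' {b | b.1 ≠ j})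

def collapseRow (j : Fin C) :
    FreeGroup (Fin C × (X ⊕ X)) →* CoprodI fun b => cond b R (FreeGroup (Fin C × (X ⊕ X))) :=
  FreeGroup.lift fun b =>
    if b.1 = j then
      (of (i := false) (blockPrefix C j b.2))⁻¹ * of (i := true) (genVal f b.2) *
        (of (i := false) (blockSuffix C j b.2))⁻¹
    else of (i := false) (FreeGroup.of b)

variable {C}

def rowCount (j : Fin C) (w : List ((Fin C × (X ⊕ X)) × Bool)) : ℕ :=
  (w.map fun p => p.1.1).count j

lemma blockA'_eq_prefix_mul_of_mul_suffix (j : Fin C) (y : X ⊕ X) :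
    blockA' C y = blockPrefix C j y * FreeGroup.of (j, y) * blockSuffix C j y := by
  have hj : j.val < (List.ofFn fun k : Fin C => FreeGroup.of (k, y)).length := by simp
  rw [blockA', ← List.take_append_drop j.val (List.ofFn _), List.drop_eq_getElem_cons hj]
  simp [blockPrefix, blockSuffix, mul_assoc]

lemma of_mem_rowComplement {j : Fin C} {b : Fin C × (X ⊕ X)} (hb : b.1 ≠ j) :
    FreeGroup.of b ∈ rowComplement C j :=
  Subgroup.subset_closure ⟨b, hb, rfl⟩

lemma blockPrefix_mem (j : Fin C) (y : X ⊕ X) : blockPrefix C j y ∈ rowComplement C j := by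
  refine Subgroup.list_prod_mem _ fun x hx => ?_
  obtain ⟨k, hk, rfl⟩ := List.mem_take_iff_getElem.1 hx
  rw [List.getElem_ofFn]
  exact of_mem_rowComplement fun h => by simp [← h] at hk

lemma blockSuffix_mem (j : Fin C) (y : X ⊕ X) : blockSuffix C j y ∈ rowComplement C j := by
  refine Subgroup.list_prod_mem _ fun x hx => ?_
  obtain ⟨k, hk, rfl⟩ := List.mem_drop_iff_getElem.1 hx
  rw [List.getElem_ofFn]
  exact of_mem_rowComplement fun h => by simp [Fin.ext_iff] at h; omega

lemma exists_mul_rowCount_le (hC : 1 ≤ C) (w : List ((Fin C × (X ⊕ X)) × Bool)) :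
    ∃ j : Fin C, C * rowCount j w ≤ w.length := by
  classical
  have hsum : ∑ j : Fin C, rowCount j w = w.length := by
    simpa [rowCount] using Multiset.sum_count_eq_card (s := Finset.univ)
      (m := (w.map fun p => p.1.1 : Multiset (Fin C))) (by simp)
  obtain ⟨j, -, hj⟩ := Finset.exists_le_of_sum_le (s := Finset.univ)
    (f := fun j => C * rowCount j w) (g := fun _ => w.length) ⟨⟨0, hC⟩, Finset.mem_univ _⟩
    (by simp [← Finset.mul_sum, hsum])
  exact ⟨j, hj⟩

lemma collapseRow_of_mem {j : Fin C} {x : FreeGroup (Fin C × (X ⊕ X))}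
    (hx : x ∈ rowComplement C j) : collapseRow f C j x = of (i := false) x := by
  induction hx using Subgroup.closure_induction with
  | mem _ hb =>
    obtain ⟨b, hb, rfl⟩ := hb
    exact (FreeGroup.lift_apply_of ..).trans (if_neg hb)
  | one => simp
  | mul _ _ _ _ hx hy => simp [hx, hy]
  | inv _ _ hx => simp [hx]

lemma collapseRow_blockA' (j : Fin C) (y : X ⊕ X) :
    collapseRow f C j (blockA' C y) = of (i := true) (genVal f y) := by
  rw [blockA'_eq_prefix_mul_of_mul_suffix j y, map_mul, map_mul,
    collapseRow_of_mem f (blockPrefix_mem j y), collapseRow_of_mem f (blockSuffix_mem j y)]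
  simp only [collapseRow, FreeGroup.lift_apply_of, if_true]
  group

lemma collapseRow_blockLetter (j : Fin C) (p : (X ⊕ X) × Bool) :
    collapseRow f C j (blockLetter C p) = of (i := true) (letterVal f p) := by
  cases h : p.2 <;> simp [blockLetter, letterVal, bpow, h, collapseRow_blockA']

lemma collapseRow_relC (j : Fin C) (s : List (X ⊕ X)) :
    collapseRow f C j (relC C s) = of (i := true) (evalWord f (s.map fun a => (a, true))) := by
  rw [relC_eq_prod_map_blockLetter, map_prod_map_eq_of (collapseRow_blockLetter f j)]
  rfl

lemma exists_syllables_mk_singleton (j : Fin C) (p : (Fin C × (X ⊕ X)) × Bool) :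
    ∃ L : List (rowComplement C j ⊕ List ((X ⊕ X) × Bool)),
      (L.map (syllableVal (rowComplement C j).subtype (blockLetter C))).prod = FreeGroup.mk [p] ∧
      (L.map syllableLength).sum = if p.1.1 = j then 1 else 0 := by
  obtain ⟨⟨k, y⟩, δ⟩ := p
  rw [FreeGroup.mk_singleton]
  by_cases hk : k = j
  · subst hk
    have hA := blockA'_eq_prefix_mul_of_mul_suffix k y
    let U : rowComplement C k := ⟨_, blockPrefix_mem k y⟩
    let Q : rowComplement C k := ⟨_, blockSuffix_mem k y⟩
    cases δ
    · refine ⟨[.inl Q, .inr [(y, false)], .inl U], ?_, by simp [syllableLength]⟩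
      simp [syllableVal, blockLetter, bpow, U, Q, hA]
      group
    · refine ⟨[.inl U⁻¹, .inr [(y, true)], .inl Q⁻¹], ?_, by simp [syllableLength]⟩
      simp [syllableVal, blockLetter, bpow, U, Q, hA]
  · have hmem := of_mem_rowComplement (b := (k, y)) hk
    refine ⟨[.inl ⟨bpow (FreeGroup.of (k, y)) δ, ?_⟩], ?_, by simp [syllableLength, hk]⟩
    · cases δ <;> simp [bpow, hmem]
    · simp [syllableVal]

lemma exists_syllables (j : Fin C) (w : List ((Fin C × (X ⊕ X)) × Bool)) :
    ∃ L : List (rowComplement C j ⊕ List ((X ⊕ X) × Bool)),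
      (L.map (syllableVal (rowComplement C j).subtype (blockLetter C))).prod = FreeGroup.mk w ∧
      (L.map syllableLength).sum = rowCount j w := by
  induction w with
  | nil => exact ⟨[], rfl, rfl⟩
  | cons p w ih =>
    obtain ⟨L, hval, hlen⟩ := ih
    obtain ⟨Lp, hvalp, hlenp⟩ := exists_syllables_mk_singleton j p
    refine ⟨Lp ++ L, ?_, ?_⟩
    · rw [List.map_append, List.prod_append, hval, hvalp, FreeGroup.mul_mk, List.singleton_append]
    · simp only [List.map_append, List.sum_append, hlen, hlenp, rowCount, List.map_cons,
        List.count_cons, beq_iff_eq]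
      exact add_comm _ _

def IsRelator (s : List (X ⊕ X)) : Prop :=
  s ≠ [] ∧ evalWord f (s.map fun a => (a, true)) = 1

lemma isRelator_swap_cons (y : X ⊕ X) : IsRelator f [y.swap, y] := by
  simp [IsRelator, evalWord_eq_prod_map_letterVal, letterVal, genVal_swap]

structure RelatorConjugate (X : Type) (C : ℕ) where
  word : List (X ⊕ X)
  sign : Bool
  conj : FreeGroup (Fin C × (X ⊕ X))

namespace RelatorConjugate

def val (t : RelatorConjugate X C) : FreeGroup (Fin C × (X ⊕ X)) :=
  t.conj * bpow (relC C t.word) t.sign * t.conj⁻¹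

@[simps]
def conjBy (g : FreeGroup (Fin C × (X ⊕ X))) (t : RelatorConjugate X C) : RelatorConjugate X C :=
  { t with conj := g * t.conj }

lemma prod_map_val_conjBy (g : FreeGroup (Fin C × (X ⊕ X))) (l : List (RelatorConjugate X C)) :
    ((l.map (conjBy g)).map val).prod = g * (l.map val).prod * g⁻¹ := by
  rw [← MulAut.conj_apply, map_list_prod, List.map_map, List.map_map]
  congr 1
  refine List.map_congr_left fun t _ => ?_
  simp [val, mul_assoc]

end RelatorConjugate

open RelatorConjugate

def posLetter (p : (X ⊕ X) × Bool) : X ⊕ X := if p.2 then p.1 else p.1.swap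

lemma evalWord_map_posLetter (v : List ((X ⊕ X) × Bool)) :
    evalWord f ((v.map posLetter).map fun a => (a, true)) = evalWord f v := by
  simp only [evalWord_eq_prod_map_letterVal, List.map_map]
  congr 1
  refine List.map_congr_left fun ⟨y, δ⟩ _ => ?_
  cases δ <;> simp [letterVal, posLetter, genVal_swap]

lemma exists_prod_map_blockLetter_eq_mul_relC (v : List ((X ⊕ X) × Bool)) :
    ∃ rels : List (RelatorConjugate X C),
      (v.map (blockLetter C)).prod = (rels.map val).prod * relC C (v.map posLetter) ∧
      rels.length = v.countP (fun p => !p.2) ∧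
      ∀ t ∈ rels, IsRelator f t.word ∧ t.word.length = 2 := by
  induction v with
  | nil => exact ⟨[], by simp [relC], by simp, by simp⟩
  | cons p v ih =>
    obtain ⟨rels, hval, hlen, hrels⟩ := ih
    obtain ⟨y, _ | _⟩ := p
    · -- `A_y⁻¹ = (A_ȳ A_y)⁻¹ A_ȳ`
      refine ⟨⟨[y.swap, y], false, 1⟩ :: rels.map (conjBy (blockA' C y.swap)), ?_, ?_, ?_⟩
      · simp only [List.map_cons, List.prod_cons, hval, prod_map_val_conjBy]
        simp [val, blockLetter, bpow, posLetter, relC]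
        group
      · simp [hlen]
      · simp only [List.mem_cons, List.mem_map]
        rintro t (rfl | ⟨t, ht, rfl⟩)
        · exact ⟨isRelator_swap_cons f y, rfl⟩
        · exact hrels t ht
    · refine ⟨rels.map (conjBy (blockA' C y)), ?_, ?_, ?_⟩
      · simp only [List.map_cons, List.prod_cons, hval, prod_map_val_conjBy]
        simp [blockLetter, bpow, posLetter, relC, mul_assoc]
      · simp [hlen]
      · simp only [List.mem_map]
        rintro t ⟨t, ht, rfl⟩
        exact hrels t ht

lemma exists_relatorConjugates_of_evalWord_eq_one (v : List ((X ⊕ X) × Bool))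
    (hv : evalWord f v = 1) (g : FreeGroup (Fin C × (X ⊕ X))) :
    ∃ rels : List (RelatorConjugate X C),
      g * (v.map (blockLetter C)).prod * g⁻¹ = (rels.map val).prod ∧ rels.length ≤ v.length ∧
      ∀ t ∈ rels, IsRelator f t.word ∧ t.word.length ≤ 2 * v.length := by
  rcases eq_or_ne v [] with rfl | hne
  · exact ⟨[], by simp, by simp, by simp⟩
  have hpos : 0 < v.length := List.length_pos_iff.2 hne
  by_cases hneg : v.countP (fun p => !p.2) < v.length
  · obtain ⟨rels, hval, hlen, hrels⟩ := exists_prod_map_blockLetter_eq_mul_relC f (C := C) v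
    let last : RelatorConjugate X C := ⟨v.map posLetter, true, 1⟩
    refine ⟨(rels ++ [last]).map (conjBy g), ?_, by simp; omega, ?_⟩
    · rw [prod_map_val_conjBy, List.map_append, List.prod_append, hval]
      simp [val, bpow, last, mul_assoc]
    · simp only [List.mem_map, List.mem_append, List.mem_singleton]
      rintro _ ⟨t, ht | rfl, rfl⟩
      · exact ⟨(hrels t ht).1, by simp [(hrels t ht).2]; omega⟩
      · refine ⟨⟨by simpa [last] using hne, ?_⟩, by simp [last]; omega⟩
        rw [conjBy_word, evalWord_map_posLetter, hv]
  · -- all letters of `v` are negative, so `v` is the inverse of a positive word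
    have hv' : ∀ p ∈ v, p.2 = false := by
      simpa using List.countP_eq_length.1 (le_antisymm List.countP_le_length (not_lt.1 hneg))
    set s := (v.map Prod.fst).reverse
    have hmk : FreeGroup.mk v = (FreeGroup.mk (s.map fun a => (a, true)))⁻¹ := by
      rw [FreeGroup.inv_mk, FreeGroup.invRev_map_fst_reverse hv']
    refine ⟨[⟨s, false, g⟩], ?_, by simp; omega, ?_⟩
    · rw [prod_map_blockLetter_eq_lift, hmk, map_inv, ← prod_map_blockLetter_eq_lift,
        ← relC_eq_prod_map_blockLetter]
      simp [val, bpow]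
    · simp only [List.mem_singleton]
      rintro _ rfl
      refine ⟨⟨by simpa [s] using hne, ?_⟩, by simp [s]; omega⟩
      rw [evalWord_eq_lift, ← inv_inj, ← map_inv, ← hmk, ← evalWord_eq_lift, hv, inv_one]

lemma exists_relatorConjugates_of_cellProd
    (cells : List (List ((X ⊕ X) × Bool) × FreeGroup (Fin C × (X ⊕ X))))
    (hcells : ∀ c ∈ cells, (c.1.map (letterVal f)).prod = 1) :
    ∃ rels : List (RelatorConjugate X C),
      cellProd (blockLetter C) cells = (rels.map val).prod ∧
      rels.length ≤ (cells.map fun c => c.1.length).sum ∧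
      ∀ t ∈ rels, IsRelator f t.word ∧
        t.word.length ≤ 2 * (cells.map fun c => c.1.length).sum := by
  induction cells with
  | nil => exact ⟨[], rfl, by simp, by simp⟩
  | cons c cells ih =>
    obtain ⟨rels, hval, hlen, hrels⟩ := ih fun c' hc' => hcells c' (List.mem_cons_of_mem _ hc')
    obtain ⟨rels₀, hval₀, hlen₀, hrels₀⟩ :=
      exists_relatorConjugates_of_evalWord_eq_one f c.1 (hcells c List.mem_cons_self) c.2
    refine ⟨rels₀ ++ rels, ?_, by simp; omega, ?_⟩
    · rw [← List.singleton_append, cellProd_append, hval, List.map_append, List.prod_append,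
        ← hval₀]
      simp [cellProd]
    · simp only [List.mem_append, List.map_cons, List.sum_cons]
      rintro t (ht | ht)
      · exact ⟨(hrels₀ t ht).1, by linarith [(hrels₀ t ht).2]⟩
      · exact ⟨(hrels t ht).1, by linarith [(hrels t ht).2]⟩

lemma exists_relatorConjugates_of_collapseRow_eq_one (j : Fin C)
    (w : List ((Fin C × (X ⊕ X)) × Bool)) (hw : collapseRow f C j (FreeGroup.mk w) = 1) :
    ∃ rels : List (RelatorConjugate X C),
      FreeGroup.mk w = (rels.map val).prod ∧ rels.length ≤ rowCount j w ∧
      ∀ t ∈ rels, IsRelator f t.word ∧ t.word.length ≤ 2 * rowCount j w := by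
  obtain ⟨L, hval, hlen⟩ := exists_syllables j w
  obtain ⟨cells, hcells_val, hcells, hcells_len⟩ :=
    exists_cells_of_map_eq_one (Subgroup.subtype_injective _)
      (fun k => collapseRow_of_mem f k.2) (collapseRow_blockLetter f j) L (hval ▸ hw)
  obtain ⟨rels, hrels_val, hrels_len, hrels⟩ := exists_relatorConjugates_of_cellProd f cells hcells
  refine ⟨rels, by rw [← hval, hcells_val, hrels_val], by omega, fun t ht => ⟨(hrels t ht).1, ?_⟩⟩
  linarith [(hrels t ht).2]

end BlockPresentation

open BlockPresentation

theorem statement19_general {X : Type} {R : Type} [Group R] (f : X → R)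
    (C : ℕ) (hC : 1 ≤ C)
    (w : List ((Fin C × (X ⊕ X)) × Bool))
    (hw1 : FreeGroup.mk w ∈ Subgroup.normalClosure
      {r : FreeGroup (Fin C × (X ⊕ X)) | ∃ s : List (X ⊕ X), s ≠ [] ∧
        evalWord f (s.map fun a => (a, true)) = 1 ∧ relC C s = r}) :
    ∃ (m₀ : ℕ) (s : Fin m₀ → List (X ⊕ X)) (ε : Fin m₀ → Bool)
      (g : Fin m₀ → FreeGroup (Fin C × (X ⊕ X))),
      C * m₀ ≤ w.length ∧
      (∀ i, s i ≠ [] ∧ evalWord f ((s i).map fun a => (a, true)) = 1 ∧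
        C * (s i).length ≤ 2 * w.length) ∧
      FreeGroup.mk w =
        (List.ofFn fun i => g i * bpow (relC C (s i)) (ε i) * (g i)⁻¹).prod := by
  obtain ⟨j, hj⟩ := exists_mul_rowCount_le hC w
  have hβ : collapseRow f C j (FreeGroup.mk w) = 1 := by
    refine Subgroup.normalClosure_le_normal (N := (collapseRow f C j).ker) ?_ hw1
    rintro _ ⟨s, -, hs, rfl⟩
    simp [collapseRow_relC, hs]
  obtain ⟨rels, hw, hlen, hrels⟩ := exists_relatorConjugates_of_collapseRow_eq_one f j w hβ
  refine ⟨rels.length, fun i => rels[i].word, fun i => rels[i].sign, fun i => rels[i].conj,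
    le_trans (Nat.mul_le_mul_left C hlen) hj, fun i => ?_, ?_⟩
  · obtain ⟨⟨hne, hev⟩, hle⟩ := hrels _ (List.getElem_mem i.2)
    refine ⟨hne, hev, ?_⟩
    calc C * rels[i].word.length ≤ C * (2 * rowCount j w) := Nat.mul_le_mul_left C hle
      _ = 2 * (C * rowCount j w) := by ring
      _ ≤ 2 * w.length := Nat.mul_le_mul_left 2 hj
  · rw [hw, ← List.ofFn_getElem_eq_map]
    rfl

/-- **Lemma 14.2.** For every word `w` over `Y_C ∪ Y_C⁻¹` representing the identity of
`R_C = ⟨Y_C | S_C⟩`, there exist `m₀` with `C·m₀ ≤ ‖w‖`, relators `r_i = (s_i)_C ∈ S_C`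
(for nonempty positive words `s_i` over `Y` representing `1` in `R`) with
`‖r_i‖ = C·‖s_i‖ ≤ 2‖w‖`, signs `ε_i` and elements `g_i ∈ F(Y_C)`, such that
`w = g₁ r₁^{ε₁} g₁⁻¹ ⋯ g_{m₀} r_{m₀}^{ε_{m₀}} g_{m₀}⁻¹` in `F(Y_C)`. -/
theorem statement19 {X : Type} [Fintype X] {R : Type} [Group R] (f : X → R)
    (hgen : Subgroup.closure (Set.range f) = ⊤)
    (C : ℕ) (hC : 1 ≤ C)
    (w : List ((Fin C × (X ⊕ X)) × Bool))
    (hw1 : FreeGroup.mk w ∈ Subgroup.normalClosure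
      {r : FreeGroup (Fin C × (X ⊕ X)) | ∃ s : List (X ⊕ X), s ≠ [] ∧
        evalWord f (s.map fun a => (a, true)) = 1 ∧ relC C s = r}) :
    ∃ (m₀ : ℕ) (s : Fin m₀ → List (X ⊕ X)) (ε : Fin m₀ → Bool)
      (g : Fin m₀ → FreeGroup (Fin C × (X ⊕ X))),
      C * m₀ ≤ w.length ∧
      (∀ i, s i ≠ [] ∧ evalWord f ((s i).map fun a => (a, true)) = 1 ∧
        C * (s i).length ≤ 2 * w.length) ∧
      FreeGroup.mk w =
        (List.ofFn fun i => g i * bpow (relC C (s i)) (ε i) * (g i)⁻¹).prod :=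
  statement19_general f C hC w hw1
end
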